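/- arXiv:0810.1824 — 5 statements merged into one kernel-verified Lean document; each statement's English description precedes it below -/
import Mathlib

section
/- Sewing map. Let V be a Banach space, T > 0, μ > 1 and 0 < ρ < μ. Let h assign to each triple 0 ≤ s ≤ u ≤ t ≤ T an element h_{tus} ∈ V, continuously in (t,u,s), such that (i) δh = 0, i.e. h_{uvs} − h_{tvs} + h_{tus} − h_{tuv} = 0 for all 0 ≤ s ≤ v ≤ u ≤ t ≤ T, and (ii) there is K ≥ 0 with ‖h_{tus}‖ ≤ K (t−u)^ρ (u−s)^{μ−ρ} for all s ≤ u ≤ t. Then there exists a unique continuous M : {(t,s) : 0 ≤ s ≤ t ≤ T} → V with M_{tt} = 0 for all t, such that M_{ts} − M_{tu} − M_{us} = h_{tus} for all s ≤ u ≤ t and sup_{s<t} ‖M_{ts}‖/(t−s)^μ < ∞. Moreover ‖M_{ts}‖ ≤ c_μ K (t−s)^μ for all s ≤ t, where c_μ = 2 + 2^μ ∑_{k=1}^∞ k^{−μ}. -/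
/-!
Since `δh = 0`, we have `h t u s = -(g t s - g t u - g u s)` for the germ `g t s = h t s 0`, so it
suffices to sew `g`: to find an additive `A` (`A t s = A t u + A u s`) close to `g`, and to take
`M = A - g`. Here `A t s` is the limit of the Riemann sums of `g` over the dyadic partitions of
`[s, t]`: halving the mesh `(t - s) / 2 ^ a` changes the sum by at most
`K (t - s) ^ μ 2 ^ (a (1 - μ))`, so the sums converge and
`‖A t s - g t s‖ ≤ K (t - s) ^ μ / (1 - 2 ^ (1 - μ)) ≤ c_μ K (t - s) ^ μ`, the last step by Cauchy
condensation. Additivity of `A` holds at the points dividing `[s, t]` in a rational ratio, since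
the partitions into `n 2 ^ a` equal pieces give the same limit, and then everywhere by continuity
of `A`. Two solutions differ by an additive map of size `O((t - s) ^ μ)`, and such a map vanishes
since `μ > 1`.
-/

/-- The sewing constant `c_μ = 2 + 2^μ ∑_{k=1}^∞ k^{−μ}`. -/
noncomputable def cSewing (μ : ℝ) : ℝ := 2 + 2 ^ μ * ∑' k : ℕ, ((k : ℝ) + 1) ^ (-μ)

open Filter Topology Set

theorem Finset.sum_range_mul_eq_sum_sum {M : Type*} [AddCommMonoid M] (f : ℕ → M) (n m : ℕ) :
    ∑ k ∈ Finset.range (n * m), f k =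
      ∑ i ∈ Finset.range n, ∑ k ∈ Finset.range m, f (i * m + k) := by
  induction n with
  | zero => simp
  | succ n ih => rw [Nat.succ_mul, Finset.sum_range_add, ih, Finset.sum_range_succ]

theorem two_pow_mul_div_two_pow_rpow {x : ℝ} (hx : 0 ≤ x) (μ : ℝ) (a : ℕ) :
    (2 : ℝ) ^ a * (x / 2 ^ a) ^ μ = x ^ μ * ((2 : ℝ) ^ (1 - μ)) ^ a := by
  rw [Real.div_rpow hx (by positivity), ← Real.rpow_pow_comm zero_le_two,
    Real.rpow_sub two_pos, Real.rpow_one, div_pow]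
  have : ((2 : ℝ) ^ μ) ^ a ≠ 0 := by positivity
  field_simp

theorem two_rpow_one_sub_lt_one {μ : ℝ} (hμ : 1 < μ) : (2 : ℝ) ^ (1 - μ) < 1 :=
  Real.rpow_lt_one_of_one_lt_of_neg one_lt_two (by linarith)

theorem tendsto_two_rpow_one_sub_pow {μ : ℝ} (hμ : 1 < μ) :
    Tendsto (fun a : ℕ => ((2 : ℝ) ^ (1 - μ)) ^ a) atTop (𝓝 0) :=
  tendsto_pow_atTop_nhds_zero_of_lt_one (Real.rpow_nonneg zero_le_two _)
    (two_rpow_one_sub_lt_one hμ)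

theorem inv_one_sub_two_rpow_le_cSewing {μ : ℝ} (hμ : 1 < μ) :
    (1 - (2 : ℝ) ^ (1 - μ))⁻¹ ≤ cSewing μ := by
  set f : ℕ → ℝ := fun k => (k : ℝ) ^ (-μ)
  have hf : Summable f := Real.summable_nat_rpow.2 (by linarith)
  have hf_nonneg : ∀ k, 0 ≤ f k := fun k => by positivity
  have hζ : ∑' k, f k = ∑' k : ℕ, ((k : ℝ) + 1) ^ (-μ) := by
    rw [hf.tsum_eq_zero_add]
    simp [f, Real.zero_rpow (neg_ne_zero.2 (by linarith : μ ≠ 0))]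
  have hterm : ∀ a : ℕ, ((2 : ℝ) ^ (1 - μ)) ^ a = 2 ^ μ * (2 ^ a • f (2 ^ (a + 1))) := by
    intro a
    simp only [f, nsmul_eq_mul]
    push_cast
    rw [← Real.rpow_pow_comm zero_le_two, Real.rpow_neg zero_le_two, Real.rpow_sub two_pos,
      Real.rpow_one]
    have : (2 : ℝ) ^ μ ≠ 0 := by positivity
    rw [div_pow, inv_pow, pow_succ]
    field_simp
  have hpartial : ∀ N : ℕ, ∑ a ∈ Finset.range N, ((2 : ℝ) ^ (1 - μ)) ^ a ≤ 2 ^ μ * ∑' k, f k := by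
    intro N
    simp_rw [hterm, ← Finset.mul_sum]
    gcongr
    refine (Finset.sum_condensed_le' (fun m n hm hmn => ?_) N).trans
      (hf.sum_le_tsum _ fun k _ => hf_nonneg k)
    exact Real.rpow_le_rpow_of_nonpos (by positivity) (by exact_mod_cast hmn) (by linarith)
  have hgeom := hasSum_geometric_of_lt_one (Real.rpow_nonneg zero_le_two (1 - μ))
    (two_rpow_one_sub_lt_one hμ)
  have := le_of_tendsto' hgeom.tendsto_sum_nat hpartial
  rw [cSewing, ← hζ]
  linarith

namespace Sewing

noncomputable section

def gridPt (s t : ℝ) (n i : ℕ) : ℝ := s + i * (t - s) / n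

@[simp] theorem gridPt_zero (s t : ℝ) (n : ℕ) : gridPt s t n 0 = s := by simp [gridPt]

@[simp] theorem gridPt_same (s : ℝ) (n i : ℕ) : gridPt s s n i = s := by simp [gridPt]

theorem gridPt_self (s t : ℝ) {n : ℕ} (hn : n ≠ 0) : gridPt s t n n = t := by
  simp [gridPt, mul_div_cancel_left₀ (t - s) (Nat.cast_ne_zero.2 hn : (n : ℝ) ≠ 0)]

theorem gridPt_succ_sub (s t : ℝ) (n i : ℕ) :
    gridPt s t n (i + 1) - gridPt s t n i = (t - s) / n := by
  simp only [gridPt]; push_cast; ring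

theorem gridPt_mono {s t : ℝ} (hst : s ≤ t) (n : ℕ) : Monotone (gridPt s t n) := fun i j hij => by
  simp only [gridPt]; gcongr

theorem gridPt_mul_add (s t : ℝ) {n m : ℕ} (hn : n ≠ 0) (hm : m ≠ 0) (i k : ℕ) :
    gridPt s t (n * m) (i * m + k) = gridPt (gridPt s t n i) (gridPt s t n (i + 1)) m k := by
  simp only [gridPt]; push_cast; field_simp; ring

theorem gridPt_left (s t : ℝ) {n j : ℕ} (hj : j ≠ 0) (i : ℕ) :
    gridPt s (gridPt s t n j) j i = gridPt s t n i := by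
  rcases eq_or_ne n 0 with rfl | hn
  · simp [gridPt]
  simp only [gridPt]; field_simp; ring

theorem gridPt_right (s t : ℝ) (j : ℕ) {k : ℕ} (hk : k ≠ 0) (i : ℕ) :
    gridPt (gridPt s t (j + k) j) t k i = gridPt s t (j + k) (j + i) := by
  have : (j : ℝ) + k ≠ 0 := by positivity
  simp only [gridPt]; push_cast; field_simp; ring

theorem exists_gridPt_eq_of_rat (s t : ℝ) {q : ℚ} (hq : (q : ℝ) ∈ Ioo 0 1) :
    ∃ j k : ℕ, j ≠ 0 ∧ k ≠ 0 ∧ s + q * (t - s) = gridPt s t (j + k) j := by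
  have hnum : 0 < q.num := Rat.num_pos.2 (by exact_mod_cast hq.1)
  have hden : q.num < q.den := Rat.num_lt_denom_iff.2 (by exact_mod_cast hq.2)
  obtain ⟨j, hj⟩ : ∃ j : ℕ, q.num = j := ⟨q.num.toNat, (Int.toNat_of_nonneg hnum.le).symm⟩
  obtain ⟨k, hk⟩ : ∃ k : ℕ, q.den = j + k := ⟨q.den - j, by omega⟩
  refine ⟨j, k, by omega, by omega, ?_⟩
  simp only [gridPt, Rat.cast_def, hj, hk]
  push_cast
  ring

section AddCommMonoid

variable {V : Type*} [AddCommMonoid V]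

def gridSum (g : ℝ → ℝ → V) (n : ℕ) (t s : ℝ) : V :=
  ∑ i ∈ Finset.range n, g (gridPt s t n (i + 1)) (gridPt s t n i)

@[simp] theorem gridSum_one (g : ℝ → ℝ → V) (t s : ℝ) : gridSum g 1 t s = g t s := by
  simp [gridSum, gridPt_self]

theorem gridSum_mul (g : ℝ → ℝ → V) (t s : ℝ) {n m : ℕ} (hn : n ≠ 0) (hm : m ≠ 0) :
    gridSum g (n * m) t s =
      ∑ i ∈ Finset.range n, gridSum g m (gridPt s t n (i + 1)) (gridPt s t n i) := by
  simp only [gridSum, Finset.sum_range_mul_eq_sum_sum, add_assoc, gridPt_mul_add s t hn hm]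

theorem continuous_gridSum [TopologicalSpace V] [ContinuousAdd V] {g : ℝ → ℝ → V}
    (hg : Continuous (Function.uncurry g)) (n : ℕ) :
    Continuous fun p : ℝ × ℝ => gridSum g n p.1 p.2 := by
  have hpt : ∀ i, Continuous fun p : ℝ × ℝ => gridPt p.2 p.1 n i := fun i => by
    simp only [gridPt]; fun_prop
  exact continuous_finsetSum _ fun i _ => hg.comp ((hpt (i + 1)).prodMk (hpt i))

end AddCommMonoid

section Normed

variable {V : Type*} [NormedAddCommGroup V]

def IncrementBound (g : ℝ → ℝ → V) (K μ : ℝ) : Prop :=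
  ∀ s u t : ℝ, s ≤ u → u ≤ t → ‖g t s - g t u - g u s‖ ≤ K * (t - s) ^ μ

def sew (g : ℝ → ℝ → V) (t s : ℝ) : V :=
  limUnder atTop fun a : ℕ => gridSum g (2 ^ a) t s

namespace IncrementBound

variable {g : ℝ → ℝ → V} {K μ : ℝ}

theorem nonneg (hg : IncrementBound g K μ) : 0 ≤ K :=
  (norm_nonneg _).trans (by simpa using hg 0 0 1 le_rfl zero_le_one)

theorem apply_self (hg : IncrementBound g K μ) (hμ : 0 < μ) (t : ℝ) : g t t = 0 := by
  simpa [Real.zero_rpow hμ.ne'] using hg t t t le_rfl le_rfl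

theorem norm_sum_sub_le (hg : IncrementBound g K μ) (hμ : 0 ≤ μ) {p : ℕ → ℝ} (hp : Monotone p)
    (m : ℕ) :
    ‖∑ i ∈ Finset.range (m + 1), g (p (i + 1)) (p i) - g (p (m + 1)) (p 0)‖ ≤
      m * K * (p (m + 1) - p 0) ^ μ := by
  induction m with
  | zero => simp
  | succ m ih =>
    have hK := hg.nonneg
    have hp₁ : p 0 ≤ p (m + 1) := hp (Nat.zero_le _)
    have hp₂ : p (m + 1) ≤ p (m + 2) := hp (Nat.le_succ _)
    have hδ := hg (p 0) (p (m + 1)) (p (m + 2)) hp₁ hp₂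
    rw [Finset.sum_range_succ]
    calc _ = ‖(∑ i ∈ Finset.range (m + 1), g (p (i + 1)) (p i) - g (p (m + 1)) (p 0)) -
            (g (p (m + 2)) (p 0) - g (p (m + 2)) (p (m + 1)) - g (p (m + 1)) (p 0))‖ := by
          congr 1; abel
      _ ≤ m * K * (p (m + 1) - p 0) ^ μ + K * (p (m + 2) - p 0) ^ μ := norm_sub_le_of_le ih hδ
      _ ≤ m * K * (p (m + 2) - p 0) ^ μ + K * (p (m + 2) - p 0) ^ μ := by
          gcongr
      _ = (m + 1 : ℕ) * K * (p (m + 1 + 1) - p 0) ^ μ := by push_cast; ring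

theorem norm_gridSum_sub_le (hg : IncrementBound g K μ) (hμ : 0 ≤ μ) {s t : ℝ} (hst : s ≤ t)
    (m : ℕ) : ‖gridSum g (m + 1) t s - g t s‖ ≤ m * K * (t - s) ^ μ := by
  simpa [gridSum, gridPt_self s t m.succ_ne_zero] using
    hg.norm_sum_sub_le hμ (gridPt_mono hst (m + 1)) m

theorem norm_gridSum_mul_sub_le (hg : IncrementBound g K μ) (hμ : 0 ≤ μ) {s t : ℝ}
    (hst : s ≤ t) {n : ℕ} (hn : n ≠ 0) (m : ℕ) :
    ‖gridSum g (n * (m + 1)) t s - gridSum g n t s‖ ≤ n * (m * K * ((t - s) / n) ^ μ) := by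
  rw [gridSum_mul g t s hn m.succ_ne_zero, gridSum, ← Finset.sum_sub_distrib]
  refine (norm_sum_le _ _).trans <| (Finset.sum_le_card_nsmul _ _ _ fun i _ => ?_).trans_eq
    (by rw [Finset.card_range, nsmul_eq_mul])
  simpa [gridPt_succ_sub] using hg.norm_gridSum_sub_le hμ (gridPt_mono hst n (Nat.le_succ i)) m

theorem dist_gridSum_pow_two_le (hg : IncrementBound g K μ) (hμ : 0 ≤ μ) {s t : ℝ}
    (hst : s ≤ t) (a : ℕ) :
    dist (gridSum g (2 ^ a) t s) (gridSum g (2 ^ (a + 1)) t s) ≤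
      K * (t - s) ^ μ * ((2 : ℝ) ^ (1 - μ)) ^ a := by
  rw [dist_comm, dist_eq_norm, pow_succ]
  refine (hg.norm_gridSum_mul_sub_le hμ hst (pow_ne_zero a two_ne_zero) 1).trans_eq ?_
  push_cast
  rw [mul_assoc K, ← two_pow_mul_div_two_pow_rpow (sub_nonneg.2 hst)]
  ring

theorem sew_self (hg : IncrementBound g K μ) (hμ : 0 < μ) (t : ℝ) : sew g t t = 0 :=
  (tendsto_const_nhds.congr fun a => by simp [gridSum, hg.apply_self hμ] :
    Tendsto (fun a : ℕ => gridSum g (2 ^ a) t t) atTop (𝓝 0)).limUnder_eq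

variable [CompleteSpace V]

theorem tendsto_gridSum_sew (hg : IncrementBound g K μ) (hμ : 1 < μ) {s t : ℝ} (hst : s ≤ t) :
    Tendsto (fun a : ℕ => gridSum g (2 ^ a) t s) atTop (𝓝 (sew g t s)) :=
  (cauchySeq_of_le_geometric _ _ (two_rpow_one_sub_lt_one hμ)
    (hg.dist_gridSum_pow_two_le (by linarith) hst)).tendsto_limUnder

theorem dist_gridSum_sew_le (hg : IncrementBound g K μ) (hμ : 1 < μ) {s t : ℝ} (hst : s ≤ t)
    (a : ℕ) :
    dist (gridSum g (2 ^ a) t s) (sew g t s) ≤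
      K * (t - s) ^ μ * ((2 : ℝ) ^ (1 - μ)) ^ a / (1 - (2 : ℝ) ^ (1 - μ)) :=
  dist_le_of_le_geometric_of_tendsto _ _
    (two_rpow_one_sub_lt_one hμ) (hg.dist_gridSum_pow_two_le (by linarith) hst)
    (hg.tendsto_gridSum_sew hμ hst) a

theorem norm_sew_sub_le (hg : IncrementBound g K μ) (hμ : 1 < μ) {s t : ℝ} (hst : s ≤ t) :
    ‖sew g t s - g t s‖ ≤ K * (t - s) ^ μ / (1 - (2 : ℝ) ^ (1 - μ)) := by
  have := hg.dist_gridSum_sew_le hμ hst 0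
  rwa [pow_zero, pow_zero, gridSum_one, mul_one, dist_comm, dist_eq_norm] at this

theorem tendsto_gridSum_pow_two_mul_sew (hg : IncrementBound g K μ) (hμ : 1 < μ) {s t : ℝ}
    (hst : s ≤ t) (m : ℕ) :
    Tendsto (fun a : ℕ => gridSum g (2 ^ a * (m + 1)) t s) atTop (𝓝 (sew g t s)) := by
  have hdiff : Tendsto (fun a : ℕ => gridSum g (2 ^ a * (m + 1)) t s - gridSum g (2 ^ a) t s)
      atTop (𝓝 0) := by
    refine squeeze_zero_norm (fun a => ?_)
      (by simpa using (tendsto_two_rpow_one_sub_pow hμ).const_mul (m * K * (t - s) ^ μ))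
    refine (hg.norm_gridSum_mul_sub_le (by linarith) hst (pow_ne_zero a two_ne_zero) m).trans_eq ?_
    push_cast
    rw [mul_left_comm, two_pow_mul_div_two_pow_rpow (sub_nonneg.2 hst)]
    ring
  simpa using hdiff.add (hg.tendsto_gridSum_sew hμ hst)

theorem sew_eq_sum_gridPt (hg : IncrementBound g K μ) (hμ : 1 < μ) {s t : ℝ} (hst : s ≤ t)
    {n : ℕ} (hn : n ≠ 0) :
    sew g t s = ∑ i ∈ Finset.range n, sew g (gridPt s t n (i + 1)) (gridPt s t n i) := by
  obtain ⟨m, rfl⟩ := Nat.exists_eq_succ_of_ne_zero hn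
  refine tendsto_nhds_unique (hg.tendsto_gridSum_pow_two_mul_sew hμ hst m) ?_
  simp_rw [mul_comm _ (m + 1), gridSum_mul g t s hn (pow_ne_zero _ two_ne_zero)]
  exact tendsto_finsetSum _ fun i _ =>
    hg.tendsto_gridSum_sew hμ (gridPt_mono hst _ (Nat.le_succ i))

theorem sew_add_gridPt (hg : IncrementBound g K μ) (hμ : 1 < μ) {s t : ℝ} (hst : s ≤ t)
    {j k : ℕ} (hj : j ≠ 0) (hk : k ≠ 0) :
    sew g t s = sew g (gridPt s t (j + k) j) s + sew g t (gridPt s t (j + k) j) := by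
  have hsu : s ≤ gridPt s t (j + k) j := by
    simpa using gridPt_mono hst (j + k) (Nat.zero_le j)
  have hut : gridPt s t (j + k) j ≤ t :=
    (gridPt_mono hst (j + k) (Nat.le_add_right j k)).trans_eq (gridPt_self s t (by omega))
  rw [hg.sew_eq_sum_gridPt hμ hst (n := j + k) (by omega), hg.sew_eq_sum_gridPt hμ hsu hj,
    hg.sew_eq_sum_gridPt hμ hut hk, Finset.sum_range_add]
  simp only [gridPt_left s t hj, gridPt_right s t j hk, add_assoc]

theorem continuousOn_sew (hg : IncrementBound g K μ) (hμ : 1 < μ)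
    (hgc : Continuous (Function.uncurry g)) (R : ℝ) :
    ContinuousOn (fun p : ℝ × ℝ => sew g p.1 p.2) {p | p.2 ≤ p.1 ∧ p.1 - p.2 ≤ R} := by
  have hlim : Tendsto (fun a : ℕ => K * R ^ μ * ((2 : ℝ) ^ (1 - μ)) ^ a / (1 - (2 : ℝ) ^ (1 - μ)))
      atTop (𝓝 0) := by
    simpa using ((tendsto_two_rpow_one_sub_pow hμ).const_mul (K * R ^ μ)).div_const _
  refine TendstoUniformlyOn.continuousOn (F := fun a p => gridSum g (2 ^ a) p.1 p.2) ?_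
    (Frequently.of_forall (f := atTop) fun a => (continuous_gridSum hgc _).continuousOn)
  refine Metric.tendstoUniformlyOn_iff.2 fun ε hε => ?_
  filter_upwards [hlim.eventually_lt_const hε] with a ha p ⟨hp, hpR⟩
  rw [dist_comm]
  refine (hg.dist_gridSum_sew_le hμ hp a).trans_lt (lt_of_le_of_lt ?_ ha)
  have := hg.nonneg
  have := two_rpow_one_sub_lt_one hμ
  gcongr

theorem sew_add (hg : IncrementBound g K μ) (hμ : 1 < μ) (hgc : Continuous (Function.uncurry g))
    {s u t : ℝ} (hsu : s ≤ u) (hut : u ≤ t) : sew g t s = sew g u s + sew g t u := by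
  rcases hsu.eq_or_lt with rfl | hsu'
  · rw [hg.sew_self (by linarith), zero_add]
  rcases hut.eq_or_lt with rfl | hut'
  · rw [hg.sew_self (by linarith), add_zero]
  let x : ℝ → ℝ := fun θ => s + θ * (t - s)
  have hx : MapsTo x (Ioo 0 1) (Icc s t) := fun θ ⟨h0, h1⟩ => by
    have : θ * (t - s) ≤ 1 * (t - s) := by gcongr; linarith
    exact ⟨by simp only [x]; nlinarith, by simp only [x]; linarith⟩
  have hcont : ContinuousOn (fun θ => sew g (x θ) s + sew g t (x θ)) (Ioo 0 1) := by
    have hA := hg.continuousOn_sew hμ hgc (t - s)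
    exact (hA.comp (f := fun θ => (x θ, s)) (by fun_prop) fun θ hθ =>
        ⟨(hx hθ).1, by linarith [(hx hθ).2]⟩).add
      (hA.comp (f := fun θ => (t, x θ)) (by fun_prop) fun θ hθ =>
        ⟨(hx hθ).2, by linarith [(hx hθ).1]⟩)
  have hrat : EqOn (fun θ => sew g (x θ) s + sew g t (x θ)) (fun _ => sew g t s)
      (Ioo 0 1 ∩ range ((↑) : ℚ → ℝ)) := by
    rintro _ ⟨hq, q, rfl⟩
    obtain ⟨j, k, hj, hk, hxq⟩ := exists_gridPt_eq_of_rat s t hq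
    show sew g (s + q * (t - s)) s + sew g t (s + q * (t - s)) = sew g t s
    rw [hxq]
    exact (hg.sew_add_gridPt hμ (hsu.trans hut) hj hk).symm
  have hθ : (u - s) / (t - s) ∈ Ioo (0 : ℝ) 1 :=
    ⟨div_pos (by linarith) (by linarith), (div_lt_one (by linarith)).2 (by linarith)⟩
  have := hrat.of_subset_closure hcont continuousOn_const inter_subset_left
    (Rat.denseRange_cast.open_subset_closure_inter isOpen_Ioo) hθ
  have hxθ : x ((u - s) / (t - s)) = u := by
    have : t - s ≠ 0 := by linarith
    simp only [x]; field_simp; ring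
  simpa [hxθ] using this.symm

theorem sew_sub_sub (hg : IncrementBound g K μ) (hμ : 1 < μ)
    (hgc : Continuous (Function.uncurry g)) {s u t : ℝ} (hsu : s ≤ u) (hut : u ≤ t) :
    (sew g t s - g t s) - (sew g t u - g t u) - (sew g u s - g u s) =
      -(g t s - g t u - g u s) := by
  rw [hg.sew_add hμ hgc hsu hut]
  abel

theorem norm_sew_sub_le_cSewing (hg : IncrementBound g K μ) (hμ : 1 < μ) {s t : ℝ}
    (hst : s ≤ t) : ‖sew g t s - g t s‖ ≤ cSewing μ * K * (t - s) ^ μ := by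
  have := mul_le_mul_of_nonneg_left (inv_one_sub_two_rpow_le_cSewing hμ)
    (mul_nonneg hg.nonneg (Real.rpow_nonneg (sub_nonneg.2 hst) μ))
  refine (hg.norm_sew_sub_le hμ hst).trans ?_
  rw [div_eq_mul_inv]
  linarith

end IncrementBound

theorem eq_of_norm_sub_le_rpow {F : ℝ → V} {C μ s t : ℝ} (hμ : 1 < μ) (hst : s ≤ t)
    (hF : ∀ x y, s ≤ x → x < y → y ≤ t → ‖F y - F x‖ ≤ C * (y - x) ^ μ) : F t = F s := by
  rcases hst.eq_or_lt with rfl | hst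
  · rfl
  have hbound : ∀ a : ℕ, ‖F t - F s‖ ≤ C * (t - s) ^ μ * ((2 : ℝ) ^ (1 - μ)) ^ a := by
    intro a
    have h2a : 2 ^ a ≠ 0 := pow_ne_zero a two_ne_zero
    have hsum : F t - F s = ∑ i ∈ Finset.range (2 ^ a),
        (F (gridPt s t (2 ^ a) (i + 1)) - F (gridPt s t (2 ^ a) i)) := by
      rw [Finset.sum_range_sub (fun i => F (gridPt s t (2 ^ a) i)), gridPt_self s t h2a,
        gridPt_zero]
    rw [hsum, mul_assoc, ← two_pow_mul_div_two_pow_rpow (sub_nonneg.2 hst.le), mul_left_comm]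
    refine (norm_sum_le _ _).trans <| (Finset.sum_le_card_nsmul _ _ _ fun i hi => ?_).trans_eq
      (by rw [Finset.card_range, nsmul_eq_mul]; push_cast; rfl)
    have hstep := gridPt_succ_sub s t (2 ^ a) i
    have hlt : gridPt s t (2 ^ a) i < gridPt s t (2 ^ a) (i + 1) := by
      have : 0 < (t - s) / ((2 ^ a : ℕ) : ℝ) := div_pos (by linarith) (by positivity)
      linarith
    have hle := gridPt_mono hst.le (2 ^ a)
    refine (hF _ _ ?_ hlt ?_).trans_eq (by rw [hstep]; push_cast; rfl)
    · simpa using hle (Nat.zero_le i)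
    · simpa [gridPt_self s t h2a] using hle (Finset.mem_range.1 hi)
  have hlim := (tendsto_two_rpow_one_sub_pow hμ).const_mul (C * (t - s) ^ μ)
  rw [mul_zero] at hlim
  exact (sub_eq_zero.1 (norm_le_zero_iff.1 (ge_of_tendsto' hlim hbound)))

theorem eq_of_sub_sub_eq {T μ : ℝ} (hμ : 1 < μ) {h : ℝ → ℝ → ℝ → V} {M M' : ℝ → ℝ → V}
    (hM : ∀ s u t, 0 ≤ s → s ≤ u → u ≤ t → t ≤ T → M t s - M t u - M u s = h t u s)
    (hM' : ∀ s u t, 0 ≤ s → s ≤ u → u ≤ t → t ≤ T → M' t s - M' t u - M' u s = h t u s)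
    (hMC : ∃ C, ∀ s t, 0 ≤ s → s < t → t ≤ T → ‖M t s‖ ≤ C * (t - s) ^ μ)
    (hM'C : ∃ C, ∀ s t, 0 ≤ s → s < t → t ≤ T → ‖M' t s‖ ≤ C * (t - s) ^ μ)
    {s t : ℝ} (hs : 0 ≤ s) (hst : s ≤ t) (htT : t ≤ T) : M' t s = M t s := by
  obtain ⟨C, hC⟩ := hMC
  obtain ⟨C', hC'⟩ := hM'C
  have hF : ∀ x y, 0 ≤ x → x ≤ y → y ≤ T →
      M' y x - M y x = (M' y 0 - M y 0) - (M' x 0 - M x 0) := by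
    intro x y hx hxy hyT
    have e := (hM' 0 x y le_rfl hx hxy hyT).trans (hM 0 x y le_rfl hx hxy hyT).symm
    calc M' y x - M y x = (M' y 0 - M y 0) - (M' x 0 - M x 0) -
          ((M' y 0 - M' y x - M' x 0) - (M y 0 - M y x - M x 0)) := by abel
      _ = _ := by rw [e, sub_self, sub_zero]
  have := eq_of_norm_sub_le_rpow (F := fun x => M' x 0 - M x 0) (C := C' + C) hμ hst
    fun x y hx hxy hyt => by
      rw [← hF x y (hs.trans hx) hxy.le (hyt.trans htT), add_mul]
      exact norm_sub_le_of_le (hC' x y (hs.trans hx) hxy (hyt.trans htT))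
        (hC x y (hs.trans hx) hxy (hyt.trans htT))
  rw [← sub_eq_zero, hF s t hs hst htT, this, sub_self]

end Normed

/-- Clamping the arguments to `[0, T]` extends `(t, s) ↦ h t s 0` from the triangle
`0 ≤ s ≤ t ≤ T` to a continuous map on `ℝ × ℝ` (`min s t` keeps the arguments ordered), without
increasing the increments. -/
def clampGerm {V : Type*} {T : ℝ} (hT : 0 ≤ T) (h : ℝ → ℝ → ℝ → V) (t s : ℝ) : V :=
  h (projIcc 0 T hT t) (projIcc 0 T hT (min s t)) 0

section clampGerm

variable {V : Type*} {T : ℝ} (hT : 0 ≤ T)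

theorem clampGerm_of_mem (h : ℝ → ℝ → ℝ → V) {s t : ℝ} (hs : 0 ≤ s) (hst : s ≤ t)
    (htT : t ≤ T) : clampGerm hT h t s = h t s 0 := by
  simp [clampGerm, min_eq_left hst, projIcc_of_mem hT ⟨hs.trans hst, htT⟩,
    projIcc_of_mem hT ⟨hs, hst.trans htT⟩]

theorem continuous_clampGerm [TopologicalSpace V] {h : ℝ → ℝ → ℝ → V}
    (hcont : ContinuousOn (fun p : ℝ × ℝ × ℝ => h p.1 p.2.1 p.2.2)
      {p : ℝ × ℝ × ℝ | 0 ≤ p.2.2 ∧ p.2.2 ≤ p.2.1 ∧ p.2.1 ≤ p.1 ∧ p.1 ≤ T}) :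
    Continuous (Function.uncurry (clampGerm hT h)) :=
  hcont.comp_continuous (f := fun p : ℝ × ℝ =>
      ((projIcc 0 T hT p.1 : ℝ), (projIcc 0 T hT (min p.2 p.1) : ℝ), (0 : ℝ)))
    (by fun_prop) fun p => ⟨le_rfl, (projIcc 0 T hT (min p.2 p.1)).2.1,
      monotone_projIcc hT (min_le_right p.2 p.1), (projIcc 0 T hT p.1).2.2⟩

theorem clampGerm_sub_sub [AddCommGroup V] {h : ℝ → ℝ → ℝ → V}
    (hδ : ∀ s v u t : ℝ, 0 ≤ s → s ≤ v → v ≤ u → u ≤ t → t ≤ T →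
      h u v s - h t v s + h t u s - h t u v = 0)
    {s u t : ℝ} (hsu : s ≤ u) (hut : u ≤ t) :
    clampGerm hT h t s - clampGerm hT h t u - clampGerm hT h u s =
      -h (projIcc 0 T hT t) (projIcc 0 T hT u) (projIcc 0 T hT s) := by
  simp only [clampGerm, min_eq_left hsu, min_eq_left hut, min_eq_left (hsu.trans hut)]
  refine eq_neg_of_add_eq_zero_left ?_
  rw [← neg_eq_zero]
  convert hδ 0 _ _ _ le_rfl (projIcc 0 T hT s).2.1 (monotone_projIcc hT hsu)
    (monotone_projIcc hT hut) (projIcc 0 T hT t).2.2 using 1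
  abel

theorem clampGerm_sub_sub_of_mem [AddCommGroup V] {h : ℝ → ℝ → ℝ → V}
    (hδ : ∀ s v u t : ℝ, 0 ≤ s → s ≤ v → v ≤ u → u ≤ t → t ≤ T →
      h u v s - h t v s + h t u s - h t u v = 0)
    {s u t : ℝ} (hs : 0 ≤ s) (hsu : s ≤ u) (hut : u ≤ t) (htT : t ≤ T) :
    clampGerm hT h t s - clampGerm hT h t u - clampGerm hT h u s = -h t u s := by
  rw [clampGerm_sub_sub hT hδ hsu hut, projIcc_of_mem hT ⟨hs, hsu.trans (hut.trans htT)⟩,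
    projIcc_of_mem hT ⟨hs.trans hsu, hut.trans htT⟩,
    projIcc_of_mem hT ⟨hs.trans (hsu.trans hut), htT⟩]

theorem incrementBound_clampGerm [NormedAddCommGroup V] {h : ℝ → ℝ → ℝ → V} {K μ ρ : ℝ}
    (hδ : ∀ s v u t : ℝ, 0 ≤ s → s ≤ v → v ≤ u → u ≤ t → t ≤ T →
      h u v s - h t v s + h t u s - h t u v = 0)
    (hbound : ∀ s u t : ℝ, 0 ≤ s → s ≤ u → u ≤ t → t ≤ T →
      ‖h t u s‖ ≤ K * (t - u) ^ ρ * (u - s) ^ (μ - ρ))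
    (hK : 0 ≤ K) (hρ : 0 ≤ ρ) (hρμ : ρ ≤ μ) :
    IncrementBound (clampGerm hT h) K μ := by
  intro s u t hsu hut
  rw [clampGerm_sub_sub hT hδ hsu hut, norm_neg]
  have hP : ∀ {x y : ℝ}, x ≤ y →
      0 ≤ (projIcc 0 T hT y : ℝ) - projIcc 0 T hT x ∧
        (projIcc 0 T hT y : ℝ) - projIcc 0 T hT x ≤ y - x := fun {x y} hxy =>
    ⟨sub_nonneg.2 (monotone_projIcc hT hxy), (le_abs_self _).trans
      ((abs_projIcc_sub_projIcc hT).trans (abs_of_nonneg (sub_nonneg.2 hxy)).le)⟩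
  have hts := sub_nonneg.2 (hsu.trans hut)
  refine (hbound _ _ _ (projIcc 0 T hT s).2.1 (monotone_projIcc hT hsu)
    (monotone_projIcc hT hut) (projIcc 0 T hT t).2.2).trans ?_
  obtain ⟨htu, htu'⟩ := hP hut
  obtain ⟨hus, hus'⟩ := hP hsu
  calc _ ≤ K * (t - s) ^ ρ * (t - s) ^ (μ - ρ) :=
        mul_le_mul (mul_le_mul_of_nonneg_left (Real.rpow_le_rpow htu (by linarith) hρ) hK)
          (Real.rpow_le_rpow hus (by linarith) (by linarith)) (Real.rpow_nonneg hus _)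
          (mul_nonneg hK (Real.rpow_nonneg hts _))
    _ = K * (t - s) ^ μ := by
        rw [mul_assoc, ← Real.rpow_add_of_nonneg hts hρ (by linarith), add_sub_cancel]

end clampGerm

end

end Sewing

theorem sewing_map_general
    {V : Type*} [NormedAddCommGroup V] [CompleteSpace V]
    (T : ℝ) (hT : 0 < T) (μ ρ : ℝ) (hμ : 1 < μ) (hρ : 0 < ρ) (hρμ : ρ < μ)
    (h : ℝ → ℝ → ℝ → V)
    (hcont : ContinuousOn (fun p : ℝ × ℝ × ℝ => h p.1 p.2.1 p.2.2)
      {p : ℝ × ℝ × ℝ | 0 ≤ p.2.2 ∧ p.2.2 ≤ p.2.1 ∧ p.2.1 ≤ p.1 ∧ p.1 ≤ T})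
    (hδ : ∀ s v u t : ℝ, 0 ≤ s → s ≤ v → v ≤ u → u ≤ t → t ≤ T →
      h u v s - h t v s + h t u s - h t u v = 0)
    (K : ℝ) (hK : 0 ≤ K)
    (hbound : ∀ s u t : ℝ, 0 ≤ s → s ≤ u → u ≤ t → t ≤ T →
      ‖h t u s‖ ≤ K * (t - u) ^ ρ * (u - s) ^ (μ - ρ)) :
    ∃ M : ℝ → ℝ → V,
      (ContinuousOn (fun p : ℝ × ℝ => M p.1 p.2)
          {p : ℝ × ℝ | 0 ≤ p.2 ∧ p.2 ≤ p.1 ∧ p.1 ≤ T} ∧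
        (∀ t : ℝ, 0 ≤ t → t ≤ T → M t t = 0) ∧
        (∀ s u t : ℝ, 0 ≤ s → s ≤ u → u ≤ t → t ≤ T →
          M t s - M t u - M u s = h t u s) ∧
        (∃ C : ℝ, ∀ s t : ℝ, 0 ≤ s → s < t → t ≤ T → ‖M t s‖ ≤ C * (t - s) ^ μ)) ∧
      (∀ s t : ℝ, 0 ≤ s → s ≤ t → t ≤ T → ‖M t s‖ ≤ cSewing μ * K * (t - s) ^ μ) ∧
      (∀ M' : ℝ → ℝ → V,
        (ContinuousOn (fun p : ℝ × ℝ => M' p.1 p.2)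
            {p : ℝ × ℝ | 0 ≤ p.2 ∧ p.2 ≤ p.1 ∧ p.1 ≤ T} ∧
          (∀ t : ℝ, 0 ≤ t → t ≤ T → M' t t = 0) ∧
          (∀ s u t : ℝ, 0 ≤ s → s ≤ u → u ≤ t → t ≤ T →
            M' t s - M' t u - M' u s = h t u s) ∧
          (∃ C : ℝ, ∀ s t : ℝ, 0 ≤ s → s < t → t ≤ T → ‖M' t s‖ ≤ C * (t - s) ^ μ)) →
        ∀ s t : ℝ, 0 ≤ s → s ≤ t → t ≤ T → M' t s = M t s) := by
  set G := Sewing.clampGerm hT.le h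
  have hG : Sewing.IncrementBound G K μ :=
    Sewing.incrementBound_clampGerm hT.le hδ hbound hK hρ.le hρμ.le
  have hGc : Continuous (Function.uncurry G) := Sewing.continuous_clampGerm hT.le hcont
  have hMδ : ∀ s u t : ℝ, 0 ≤ s → s ≤ u → u ≤ t → t ≤ T →
      (Sewing.sew G t s - G t s) - (Sewing.sew G t u - G t u) - (Sewing.sew G u s - G u s) =
        h t u s := fun s u t hs hsu hut htT => by
    rw [hG.sew_sub_sub hμ hGc hsu hut, Sewing.clampGerm_sub_sub_of_mem hT.le hδ hs hsu hut htT,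
      neg_neg]
  have hMbound := fun s t (hst : s ≤ t) => hG.norm_sew_sub_le_cSewing hμ hst
  refine ⟨fun t s => Sewing.sew G t s - G t s, ⟨?_, fun t _ _ => ?_, hMδ,
    ⟨_, fun s t _ hst _ => hMbound s t hst.le⟩⟩, fun s t _ hst _ => hMbound s t hst,
    fun M' ⟨_, _, hM'δ, hM'C⟩ s t hs hst htT =>
      Sewing.eq_of_sub_sub_eq hμ hMδ hM'δ ⟨_, fun s t _ hst _ => hMbound s t hst.le⟩ hM'C
        hs hst htT⟩
  · exact ((hG.continuousOn_sew hμ hGc T).mono fun p hp =>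
      ⟨hp.2.1, by linarith [hp.1, hp.2.2]⟩).sub hGc.continuousOn
  · simp [hG.sew_self (by linarith), hG.apply_self (by linarith)]

/-- The sewing map. -/
theorem sewing_map
    {V : Type*} [NormedAddCommGroup V] [NormedSpace ℝ V] [CompleteSpace V]
    (T : ℝ) (hT : 0 < T) (μ ρ : ℝ) (hμ : 1 < μ) (hρ : 0 < ρ) (hρμ : ρ < μ)
    (h : ℝ → ℝ → ℝ → V)
    (hcont : ContinuousOn (fun p : ℝ × ℝ × ℝ => h p.1 p.2.1 p.2.2)
      {p : ℝ × ℝ × ℝ | 0 ≤ p.2.2 ∧ p.2.2 ≤ p.2.1 ∧ p.2.1 ≤ p.1 ∧ p.1 ≤ T})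
    (hδ : ∀ s v u t : ℝ, 0 ≤ s → s ≤ v → v ≤ u → u ≤ t → t ≤ T →
      h u v s - h t v s + h t u s - h t u v = 0)
    (K : ℝ) (hK : 0 ≤ K)
    (hbound : ∀ s u t : ℝ, 0 ≤ s → s ≤ u → u ≤ t → t ≤ T →
      ‖h t u s‖ ≤ K * (t - u) ^ ρ * (u - s) ^ (μ - ρ)) :
    ∃ M : ℝ → ℝ → V,
      (ContinuousOn (fun p : ℝ × ℝ => M p.1 p.2)
          {p : ℝ × ℝ | 0 ≤ p.2 ∧ p.2 ≤ p.1 ∧ p.1 ≤ T} ∧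
        (∀ t : ℝ, 0 ≤ t → t ≤ T → M t t = 0) ∧
        (∀ s u t : ℝ, 0 ≤ s → s ≤ u → u ≤ t → t ≤ T →
          M t s - M t u - M u s = h t u s) ∧
        (∃ C : ℝ, ∀ s t : ℝ, 0 ≤ s → s < t → t ≤ T → ‖M t s‖ ≤ C * (t - s) ^ μ)) ∧
      (∀ s t : ℝ, 0 ≤ s → s ≤ t → t ≤ T → ‖M t s‖ ≤ cSewing μ * K * (t - s) ^ μ) ∧
      (∀ M' : ℝ → ℝ → V,
        (ContinuousOn (fun p : ℝ × ℝ => M' p.1 p.2)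
            {p : ℝ × ℝ | 0 ≤ p.2 ∧ p.2 ≤ p.1 ∧ p.1 ≤ T} ∧
          (∀ t : ℝ, 0 ≤ t → t ≤ T → M' t t = 0) ∧
          (∀ s u t : ℝ, 0 ≤ s → s ≤ u → u ≤ t → t ≤ T →
            M' t s - M' t u - M' u s = h t u s) ∧
          (∃ C : ℝ, ∀ s t : ℝ, 0 ≤ s → s < t → t ≤ T → ‖M' t s‖ ≤ C * (t - s) ^ μ)) →
        ∀ s t : ℝ, 0 ≤ s → s ≤ t → t ≤ T → M' t s = M t s) :=
  sewing_map_general T hT μ ρ hμ hρ hρμ h hcont hδ K hK hbound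
end

section
/- Integration of small increments. Let V be a Banach space, T > 0, μ > 1 and 0 < ρ < μ. Let g : {(t,s) : 0 ≤ s ≤ t ≤ T} → V be continuous with g_{tt} = 0 for all t, and suppose there is K ≥ 0 such that ‖(δg)_{tus}‖ = ‖g_{ts} − g_{tu} − g_{us}‖ ≤ K (t−u)^ρ (u−s)^{μ−ρ} for all s ≤ u ≤ t. Then for every 0 ≤ s ≤ t ≤ T the Riemann sums ∑_{i=0}^{n−1} g_{t_{i+1} t_i}, taken over partitions s = t_0 < t_1 < ⋯ < t_n = t, converge in V as the mesh of the partition tends to 0; the limit F_{ts} is additive (F_{ts} = F_{tu} + F_{us} for all s ≤ u ≤ t) and satisfies ‖F_{ts} − g_{ts}‖ ≤ c_μ K (t−s)^μ, where c_μ = 2 + 2^μ ∑_{k=1}^∞ k^{−μ}. -/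
namespace Sewing

open Finset Filter Topology

section Partitions

variable {α V : Type*}

def riemannSum [AddCommMonoid V] (g : α → α → V) (π : ℕ → α) (n : ℕ) : V :=
  ∑ i ∈ range n, g (π (i + 1)) (π i)

def increment [AddCommGroup V] (g : α → α → V) (t u s : α) : V :=
  g t s - g t u - g u s

def deletePoint (π : ℕ → α) (k : ℕ) : ℕ → α :=
  fun j => π (if j < k then j else j + 1)

def append (π₁ : ℕ → α) (n : ℕ) (π₂ : ℕ → α) : ℕ → α :=
  fun i => if i ≤ n then π₁ i else π₂ (i - n)

theorem riemannSum_deletePoint [AddCommGroup V] (g : α → α → V) (π : ℕ → α) {p m : ℕ}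
    (hpm : p ≤ m) :
    riemannSum g (deletePoint π (p + 1)) (m + 1) =
      riemannSum g π (m + 2) + increment g (π (p + 2)) (π (p + 1)) (π p) := by
  have hπ' : ∀ j, deletePoint π (p + 1) j = if j ≤ p then π j else π (j + 1) := fun j => by
    simp only [deletePoint, Nat.lt_succ_iff]; split_ifs <;> rfl
  induction m, hpm using Nat.le_induction with
  | base =>
    have hbelow : riemannSum g (deletePoint π (p + 1)) p = riemannSum g π p :=
      sum_congr rfl fun j hj => by
        rw [mem_range] at hj
        rw [hπ', hπ', if_pos (show j + 1 ≤ p by omega), if_pos hj.le]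
    rw [riemannSum, sum_range_succ, ← riemannSum, hbelow, hπ', hπ', if_pos le_rfl,
      if_neg (by omega), riemannSum, riemannSum, sum_range_succ, sum_range_succ, increment]
    abel
  | succ m hpm ih =>
    rw [riemannSum, sum_range_succ, ← riemannSum, ih, hπ', hπ', if_neg (by omega),
      if_neg (by omega), riemannSum, riemannSum, sum_range_succ (n := m + 2)]
    abel

theorem riemannSum_append [AddCommMonoid V] (g : α → α → V) {π₁ π₂ : ℕ → α} {n₁ : ℕ}
    (h : π₁ n₁ = π₂ 0) (n₂ : ℕ) :
    riemannSum g (append π₁ n₁ π₂) (n₁ + n₂) = riemannSum g π₁ n₁ + riemannSum g π₂ n₂ := by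
  rw [riemannSum, sum_range_add]
  congr 1
  · exact sum_congr rfl fun i hi => by
      have := mem_range.1 hi
      simp only [append, if_pos (show i ≤ n₁ by omega), if_pos (show i + 1 ≤ n₁ by omega)]
  · refine sum_congr rfl fun i _ => ?_
    simp only [append, if_neg (show ¬ n₁ + i + 1 ≤ n₁ by omega), Nat.add_sub_cancel_left,
      show n₁ + i + 1 - n₁ = i + 1 by omega]
    split_ifs with hi
    · rw [show i = 0 by omega, add_zero, h]
    · rfl

theorem monotone_deletePoint [Preorder α] {π : ℕ → α} (hπ : Monotone π) (k : ℕ) :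
    Monotone (deletePoint π k) :=
  hπ.comp fun i j hij => by split_ifs <;> omega

theorem monotone_append [Preorder α] {π₁ π₂ : ℕ → α} {n : ℕ} (hπ₁ : Monotone π₁)
    (hπ₂ : Monotone π₂) (h : π₁ n ≤ π₂ 0) : Monotone (append π₁ n π₂) := by
  intro i j hij
  simp only [append]
  split_ifs with hi hj hj
  · exact hπ₁ hij
  · exact (hπ₁ hi).trans (h.trans (hπ₂ (Nat.zero_le _)))
  · omega
  · exact hπ₂ (by omega)

theorem riemannSum_comp_min [AddCommMonoid V] (g : α → α → V) (π : ℕ → α) (n : ℕ) :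
    riemannSum g (fun i => π (min i n)) n = riemannSum g π n :=
  sum_congr rfl fun i hi => by
    rw [mem_range] at hi
    simp only [min_eq_left hi.le, min_eq_left (Nat.succ_le_of_lt hi)]

theorem monotone_comp_min [Preorder α] {π : ℕ → α} {n : ℕ} (h : ∀ i < n, π i ≤ π (i + 1)) :
    Monotone fun i => π (min i n) :=
  monotone_nat_of_le_succ fun i => by
    rcases lt_or_ge i n with hi | hi
    · rw [min_eq_left hi.le, min_eq_left hi]
      exact h i hi
    · rw [min_eq_right hi, min_eq_right (by omega)]

def clampTo [LinearOrder α] (a b : α) (π : ℕ → α) : ℕ → α :=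
  fun i => max a (min b (π i))

theorem monotone_clampTo [LinearOrder α] (a b : α) {π : ℕ → α} (hπ : Monotone π) :
    Monotone (clampTo a b π) :=
  fun _ _ hij => max_le_max le_rfl (min_le_min le_rfl (hπ hij))

/-- Clamping `π₂` into each interval `[π₁ j, π₁ (j + 1)]` of `π₁` gives the common refinement of
the two partitions. -/
def refinementSum [LinearOrder α] [AddCommMonoid V] (g : α → α → V) (π₁ : ℕ → α) (n₁ : ℕ)
    (π₂ : ℕ → α) (n₂ : ℕ) : V :=
  ∑ j ∈ range n₁, riemannSum g (clampTo (π₁ j) (π₁ (j + 1)) π₂) n₂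

-- Both sides are `g (min b d) (max a c)` if `[a, b]` and `[c, d]` overlap, and a diagonal value
-- `g x x` otherwise.
theorem apply_clampTo_comm [LinearOrder α] [Zero V] {g : α → α → V} (hg : ∀ x, g x x = 0)
    {a b c d : α} (hab : a ≤ b) (hcd : c ≤ d) :
    g (max a (min b d)) (max a (min b c)) = g (max c (min d b)) (max c (min d a)) := by
  rcases le_or_gt b c with hbc | hcb
  · rw [min_eq_left (hbc.trans hcd), min_eq_left hbc, max_eq_right hab, hg,
      min_eq_right (hbc.trans hcd), max_eq_left hbc, min_eq_right (hab.trans (hbc.trans hcd)),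
      max_eq_left (hab.trans hbc), hg]
  rcases le_or_gt d a with hda | had
  · rw [min_eq_right (hda.trans hab), max_eq_left hda, min_eq_right ((hcd.trans hda).trans hab),
      max_eq_left (hcd.trans hda), hg, min_eq_left (hda.trans hab), max_eq_right hcd,
      min_eq_left hda, max_eq_right hcd, hg]
  rw [max_eq_right (le_min hab had.le), min_eq_right hcb.le, max_eq_right (le_min hcd hcb.le),
    min_eq_right had.le, min_comm, max_comm]

theorem refinementSum_comm [LinearOrder α] [AddCommMonoid V] {g : α → α → V}
    (hg : ∀ x, g x x = 0) {π₁ π₂ : ℕ → α} (hπ₁ : Monotone π₁) (hπ₂ : Monotone π₂) (n₁ n₂ : ℕ) :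
    refinementSum g π₁ n₁ π₂ n₂ = refinementSum g π₂ n₂ π₁ n₁ := by
  simp only [refinementSum, riemannSum, clampTo]
  rw [sum_comm]
  exact sum_congr rfl fun i _ => sum_congr rfl fun j _ =>
    apply_clampTo_comm hg (hπ₁ j.le_succ) (hπ₂ i.le_succ)

end Partitions

section Estimates

variable {V : Type*} [SeminormedAddCommGroup V] {g : ℝ → ℝ → V} {K μ : ℝ}

noncomputable def sewingConst (μ : ℝ) : ℝ := 2 ^ μ * ∑' k : ℕ, ((k : ℝ) + 1) ^ (-μ)

theorem sewingConst_nonneg (μ : ℝ) : 0 ≤ sewingConst μ :=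
  mul_nonneg (by positivity) (tsum_nonneg fun _ => by positivity)

theorem sewingConst_le_cSewing (μ : ℝ) : sewingConst μ ≤ cSewing μ :=
  le_add_of_nonneg_left zero_le_two

theorem exists_two_step_le {π : ℕ → ℝ} (hπ : Monotone π) (m : ℕ) :
    ∃ p ≤ m, ((m : ℝ) + 1) * (π (p + 2) - π p) ≤ 2 * (π (m + 2) - π 0) := by
  have htelescope : ∑ p ∈ range (m + 1), (π (p + 2) - π p) =
      (π (m + 2) - π 1) + (π (m + 1) - π 0) := by
    rw [← sum_range_sub (fun i => π (i + 1)), ← sum_range_sub π, ← sum_add_distrib]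
    exact sum_congr rfl fun p _ => by ring
  have hsum : ∑ p ∈ range (m + 1), ((m : ℝ) + 1) * (π (p + 2) - π p) ≤
      ∑ _p ∈ range (m + 1), 2 * (π (m + 2) - π 0) := by
    rw [← mul_sum, htelescope, sum_const, card_range, nsmul_eq_mul]
    have h₁ := hπ (Nat.zero_le 1)
    have h₂ := hπ (Nat.le_succ (m + 1))
    push_cast
    nlinarith
  obtain ⟨p, hp, hle⟩ := exists_le_of_sum_le nonempty_range_add_one hsum
  exact ⟨p, Nat.lt_succ_iff.1 (mem_range.1 hp), hle⟩

theorem norm_riemannSum_sub_le_partialSum (hμ : 0 ≤ μ) (hK : 0 ≤ K) (hg₀ : ∀ t, g t t = 0)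
    (hg : ∀ s u t, s ≤ u → u ≤ t → ‖increment g t u s‖ ≤ K * (t - s) ^ μ)
    {π : ℕ → ℝ} (hπ : Monotone π) (n : ℕ) :
    ‖riemannSum g π n - g (π n) (π 0)‖ ≤
      2 ^ μ * (∑ k ∈ range (n - 1), ((k : ℝ) + 1) ^ (-μ)) * K * (π n - π 0) ^ μ := by
  induction n generalizing π with
  | zero => simp [riemannSum, hg₀]
  | succ n ih =>
    rcases n with _ | m
    · simp [riemannSum]
    obtain ⟨p, hpm, hp⟩ := exists_two_step_le hπ m
    have hΔ : 0 ≤ π (m + 2) - π 0 := sub_nonneg.2 (hπ (Nat.zero_le _))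
    have hdelete := ih (monotone_deletePoint hπ (p + 1))
    have hstart : deletePoint π (p + 1) 0 = π 0 := congrArg π (if_pos p.succ_pos)
    have hend : deletePoint π (p + 1) (m + 1) = π (m + 2) := congrArg π (if_neg (by omega))
    rw [hstart, hend, riemannSum_deletePoint g π hpm] at hdelete
    have hincrement : ‖increment g (π (p + 2)) (π (p + 1)) (π p)‖ ≤
        K * (2 ^ μ * ((m : ℝ) + 1) ^ (-μ) * (π (m + 2) - π 0) ^ μ) := by
      calc _ ≤ K * (π (p + 2) - π p) ^ μ := hg _ _ _ (hπ (by omega)) (hπ (by omega))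
        _ ≤ K * (2 * (π (m + 2) - π 0) / ((m : ℝ) + 1)) ^ μ := by
          have := hπ (show p ≤ p + 2 by omega)
          gcongr
          rw [le_div_iff₀ (by positivity)]
          linarith
        _ = _ := by
          rw [Real.div_rpow (by positivity) (by positivity), Real.mul_rpow zero_le_two hΔ,
            Real.rpow_neg (by positivity)]
          ring
    calc ‖riemannSum g π (m + 2) - g (π (m + 2)) (π 0)‖
        = ‖(riemannSum g π (m + 2) + increment g (π (p + 2)) (π (p + 1)) (π p)
            - g (π (m + 2)) (π 0)) - increment g (π (p + 2)) (π (p + 1)) (π p)‖ := by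
          congr 1; abel
      _ ≤ _ := (norm_sub_le _ _).trans (add_le_add hdelete hincrement)
      _ = _ := by rw [Nat.add_sub_cancel, Nat.add_sub_cancel, sum_range_succ]; ring

theorem norm_riemannSum_sub_le (hμ : 1 < μ) (hK : 0 ≤ K) (hg₀ : ∀ t, g t t = 0)
    (hg : ∀ s u t, s ≤ u → u ≤ t → ‖increment g t u s‖ ≤ K * (t - s) ^ μ)
    {π : ℕ → ℝ} (hπ : Monotone π) (n : ℕ) :
    ‖riemannSum g π n - g (π n) (π 0)‖ ≤ sewingConst μ * K * (π n - π 0) ^ μ := by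
  refine (norm_riemannSum_sub_le_partialSum (by linarith) hK hg₀ hg hπ n).trans ?_
  have hsummable : Summable fun k : ℕ => ((k : ℝ) + 1) ^ (-μ) := by
    simpa using (summable_nat_add_iff 1).2 (Real.summable_nat_rpow.2 (by linarith : -μ < -1))
  have := hπ (Nat.zero_le n)
  unfold sewingConst
  gcongr
  exact hsummable.sum_le_tsum _ fun k _ => by positivity

theorem sum_rpow_sub_le {π : ℕ → ℝ} (hπ : Monotone π) (hμ : 1 ≤ μ) {n : ℕ} {δ : ℝ}
    (hmesh : ∀ i < n, π (i + 1) - π i ≤ δ) :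
    ∑ i ∈ range n, (π (i + 1) - π i) ^ μ ≤ δ ^ (μ - 1) * (π n - π 0) := by
  rw [← sum_range_sub π, mul_sum]
  refine sum_le_sum fun i hi => ?_
  have h₀ : 0 ≤ π (i + 1) - π i := sub_nonneg.2 (hπ i.le_succ)
  have hsplit := Real.rpow_add_one' h₀ (show μ - 1 + 1 ≠ 0 by linarith)
  rw [sub_add_cancel] at hsplit
  rw [hsplit]
  exact mul_le_mul_of_nonneg_right
    (Real.rpow_le_rpow h₀ (hmesh i (mem_range.1 hi)) (by linarith)) h₀

theorem norm_refinementSum_sub_riemannSum_le (hμ : 1 < μ) (hK : 0 ≤ K)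
    (hg₀ : ∀ t, g t t = 0)
    (hg : ∀ s u t, s ≤ u → u ≤ t → ‖increment g t u s‖ ≤ K * (t - s) ^ μ)
    {π₁ π₂ : ℕ → ℝ} (hπ₁ : Monotone π₁) (hπ₂ : Monotone π₂) {n₁ n₂ : ℕ}
    (h₀ : π₂ 0 ≤ π₁ 0) (hn : π₁ n₁ ≤ π₂ n₂) {δ : ℝ} (hmesh : ∀ i < n₁, π₁ (i + 1) - π₁ i ≤ δ) :
    ‖refinementSum g π₁ n₁ π₂ n₂ - riemannSum g π₁ n₁‖ ≤
      sewingConst μ * K * δ ^ (μ - 1) * (π₁ n₁ - π₁ 0) := by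
  have hpiece : ∀ j < n₁,
      ‖riemannSum g (clampTo (π₁ j) (π₁ (j + 1)) π₂) n₂ - g (π₁ (j + 1)) (π₁ j)‖ ≤
        sewingConst μ * K * (π₁ (j + 1) - π₁ j) ^ μ := by
    intro j hj
    have hstart : clampTo (π₁ j) (π₁ (j + 1)) π₂ 0 = π₁ j :=
      max_eq_left (min_le_of_right_le (h₀.trans (hπ₁ (Nat.zero_le j))))
    have hend : clampTo (π₁ j) (π₁ (j + 1)) π₂ n₂ = π₁ (j + 1) := by
      rw [clampTo, min_eq_left ((hπ₁ hj).trans hn), max_eq_right (hπ₁ j.le_succ)]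
    have := norm_riemannSum_sub_le hμ hK hg₀ hg (monotone_clampTo (π₁ j) (π₁ (j + 1)) hπ₂) n₂
    rwa [hstart, hend] at this
  rw [refinementSum, riemannSum, ← sum_sub_distrib]
  calc _ ≤ ∑ j ∈ range n₁, sewingConst μ * K * (π₁ (j + 1) - π₁ j) ^ μ :=
        (norm_sum_le _ _).trans (sum_le_sum fun j hj => hpiece j (mem_range.1 hj))
    _ ≤ _ := by
      have := sewingConst_nonneg μ
      rw [← mul_sum, mul_assoc _ (δ ^ _)]
      gcongr
      exact sum_rpow_sub_le hπ₁ hμ.le hmesh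

theorem norm_riemannSum_sub_riemannSum_le (hμ : 1 < μ) (hK : 0 ≤ K) (hg₀ : ∀ t, g t t = 0)
    (hg : ∀ s u t, s ≤ u → u ≤ t → ‖increment g t u s‖ ≤ K * (t - s) ^ μ)
    {π₁ π₂ : ℕ → ℝ} (hπ₁ : Monotone π₁) (hπ₂ : Monotone π₂) {n₁ n₂ : ℕ}
    (h₀ : π₁ 0 = π₂ 0) (hn : π₁ n₁ = π₂ n₂) {δ₁ δ₂ : ℝ}
    (hmesh₁ : ∀ i < n₁, π₁ (i + 1) - π₁ i ≤ δ₁) (hmesh₂ : ∀ i < n₂, π₂ (i + 1) - π₂ i ≤ δ₂) :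
    ‖riemannSum g π₁ n₁ - riemannSum g π₂ n₂‖ ≤
      sewingConst μ * K * (δ₁ ^ (μ - 1) + δ₂ ^ (μ - 1)) * (π₁ n₁ - π₁ 0) := by
  have h₁ := norm_refinementSum_sub_riemannSum_le hμ hK hg₀ hg hπ₁ hπ₂ h₀.ge hn.le hmesh₁
  have h₂ := norm_refinementSum_sub_riemannSum_le hμ hK hg₀ hg hπ₂ hπ₁ h₀.le hn.ge hmesh₂
  rw [← refinementSum_comm hg₀ hπ₁ hπ₂, ← h₀, ← hn] at h₂
  calc _ = ‖(refinementSum g π₁ n₁ π₂ n₂ - riemannSum g π₂ n₂) -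
        (refinementSum g π₁ n₁ π₂ n₂ - riemannSum g π₁ n₁)‖ := by
        congr 1; abel
    _ ≤ _ := (norm_sub_le _ _).trans (add_le_add h₂ h₁)
    _ = _ := by ring

end Estimates

section Limit

theorem tendsto_rpow_nhds_zero {p : ℝ} (hp : 0 < p) :
    Tendsto (fun x : ℝ => x ^ p) (𝓝 0) (𝓝 0) := by
  simpa [Real.zero_rpow hp.ne'] using (Real.continuousAt_rpow_const 0 p (.inr hp.le)).tendsto

noncomputable def uniformPartition (s t : ℝ) (m i : ℕ) : ℝ := s + i * ((t - s) / m)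

theorem uniformPartition_zero (s t : ℝ) (m : ℕ) : uniformPartition s t m 0 = s := by
  simp [uniformPartition]

theorem uniformPartition_self (s t : ℝ) {m : ℕ} (hm : m ≠ 0) : uniformPartition s t m m = t := by
  have : (m : ℝ) ≠ 0 := Nat.cast_ne_zero.2 hm
  simp only [uniformPartition]
  field_simp
  ring

theorem uniformPartition_succ_sub (s t : ℝ) (m i : ℕ) :
    uniformPartition s t m (i + 1) - uniformPartition s t m i = (t - s) / m := by
  simp only [uniformPartition, Nat.cast_succ]
  ring

theorem monotone_uniformPartition {s t : ℝ} (hst : s ≤ t) (m : ℕ) :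
    Monotone (uniformPartition s t m) := fun i j hij => by
  have : 0 ≤ (t - s) / m := div_nonneg (sub_nonneg.2 hst) m.cast_nonneg
  unfold uniformPartition
  gcongr

theorem tendsto_uniformMesh_rpow {μ : ℝ} (hμ : 1 < μ) (c : ℝ) :
    Tendsto (fun m : ℕ => (c / (m + 1 : ℕ)) ^ (μ - 1)) atTop (𝓝 0) :=
  (tendsto_rpow_nhds_zero (sub_pos.2 hμ)).comp
    ((tendsto_add_atTop_iff_nat 1).2 (tendsto_const_div_atTop_nhds_zero_nat c))

variable {V : Type*} [NormedAddCommGroup V] {g : ℝ → ℝ → V} {K μ : ℝ}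

noncomputable def sewing (g : ℝ → ℝ → V) (t s : ℝ) : V :=
  limUnder atTop fun m : ℕ => riemannSum g (uniformPartition s t (m + 1)) (m + 1)

theorem cauchySeq_riemannSum_uniformPartition (hμ : 1 < μ) (hK : 0 ≤ K)
    (hg₀ : ∀ t, g t t = 0)
    (hg : ∀ s u t, s ≤ u → u ≤ t → ‖increment g t u s‖ ≤ K * (t - s) ^ μ) {s t : ℝ}
    (hst : s ≤ t) :
    CauchySeq fun m : ℕ => riemannSum g (uniformPartition s t (m + 1)) (m + 1) := by
  refine cauchySeq_of_le_tendsto_0'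
    (fun m => sewingConst μ * K * (2 * ((t - s) / (m + 1 : ℕ)) ^ (μ - 1)) * (t - s))
    (fun a b hab => ?_) ?_
  · rw [dist_eq_norm]
    refine (norm_riemannSum_sub_riemannSum_le hμ hK hg₀ hg (monotone_uniformPartition hst _)
      (monotone_uniformPartition hst _) (by simp only [uniformPartition_zero])
      (by rw [uniformPartition_self _ _ a.succ_ne_zero, uniformPartition_self _ _ b.succ_ne_zero])
      (fun i _ => (uniformPartition_succ_sub s t _ i).le)
      (fun i _ => (uniformPartition_succ_sub s t _ i).le)).trans ?_
    rw [uniformPartition_self _ _ a.succ_ne_zero, uniformPartition_zero]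
    have hΔ : 0 ≤ t - s := sub_nonneg.2 hst
    have := sewingConst_nonneg μ
    have hba : ((t - s) / (b + 1 : ℕ)) ^ (μ - 1) ≤ ((t - s) / (a + 1 : ℕ)) ^ (μ - 1) := by
      gcongr
    gcongr
    linarith
  · simpa using (((tendsto_uniformMesh_rpow hμ (t - s)).const_mul 2).const_mul
      (sewingConst μ * K)).mul_const (t - s)

theorem tendsto_riemannSum_uniformPartition [CompleteSpace V] (hμ : 1 < μ) (hK : 0 ≤ K)
    (hg₀ : ∀ t, g t t = 0)
    (hg : ∀ s u t, s ≤ u → u ≤ t → ‖increment g t u s‖ ≤ K * (t - s) ^ μ) {s t : ℝ}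
    (hst : s ≤ t) :
    Tendsto (fun m : ℕ => riemannSum g (uniformPartition s t (m + 1)) (m + 1)) atTop
      (𝓝 (sewing g t s)) :=
  (cauchySeq_riemannSum_uniformPartition hμ hK hg₀ hg hst).tendsto_limUnder

theorem norm_riemannSum_sub_sewing_le [CompleteSpace V] (hμ : 1 < μ) (hK : 0 ≤ K)
    (hg₀ : ∀ t, g t t = 0)
    (hg : ∀ s u t, s ≤ u → u ≤ t → ‖increment g t u s‖ ≤ K * (t - s) ^ μ)
    {π : ℕ → ℝ} (hπ : Monotone π) {n : ℕ} {δ : ℝ} (hmesh : ∀ i < n, π (i + 1) - π i ≤ δ) :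
    ‖riemannSum g π n - sewing g (π n) (π 0)‖ ≤ sewingConst μ * K * δ ^ (μ - 1) * (π n - π 0) := by
  have hst := hπ (Nat.zero_le n)
  have hcompare : ∀ m : ℕ,
      ‖riemannSum g π n - riemannSum g (uniformPartition (π 0) (π n) (m + 1)) (m + 1)‖ ≤
        sewingConst μ * K * (δ ^ (μ - 1) + ((π n - π 0) / (m + 1 : ℕ)) ^ (μ - 1)) *
          (π n - π 0) := fun m =>
    norm_riemannSum_sub_riemannSum_le hμ hK hg₀ hg hπ (monotone_uniformPartition hst _)
      (uniformPartition_zero _ _ _).symm (uniformPartition_self _ _ m.succ_ne_zero).symm hmesh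
      (fun i _ => (uniformPartition_succ_sub _ _ _ i).le)
  have hlim := le_of_tendsto_of_tendsto'
    ((tendsto_riemannSum_uniformPartition hμ hK hg₀ hg hst).const_sub _).norm
    ((((tendsto_uniformMesh_rpow hμ _).const_add _).const_mul _).mul_const _) hcompare
  simpa using hlim

theorem norm_sewing_sub_le [CompleteSpace V] (hμ : 1 < μ) (hK : 0 ≤ K) (hg₀ : ∀ t, g t t = 0)
    (hg : ∀ s u t, s ≤ u → u ≤ t → ‖increment g t u s‖ ≤ K * (t - s) ^ μ) {s t : ℝ}
    (hst : s ≤ t) :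
    ‖sewing g t s - g t s‖ ≤ sewingConst μ * K * (t - s) ^ μ := by
  refine le_of_tendsto'
    ((tendsto_riemannSum_uniformPartition hμ hK hg₀ hg hst).sub_const _).norm fun m => ?_
  have := norm_riemannSum_sub_le hμ hK hg₀ hg (monotone_uniformPartition hst (m + 1)) (m + 1)
  rwa [uniformPartition_zero, uniformPartition_self _ _ m.succ_ne_zero] at this

theorem exists_forall_norm_riemannSum_sub_sewing_lt [CompleteSpace V] (hμ : 1 < μ) (hK : 0 ≤ K)
    (hg₀ : ∀ t, g t t = 0)
    (hg : ∀ s u t, s ≤ u → u ≤ t → ‖increment g t u s‖ ≤ K * (t - s) ^ μ) (s t : ℝ) {ε : ℝ}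
    (hε : 0 < ε) :
    ∃ δ > 0, ∀ {π : ℕ → ℝ} {n : ℕ}, (∀ i < n, π i ≤ π (i + 1)) → π 0 = s → π n = t →
      (∀ i < n, π (i + 1) - π i ≤ δ) → ‖riemannSum g π n - sewing g t s‖ < ε := by
  have hsmall : ∀ᶠ δ in 𝓝[>] 0, sewingConst μ * K * δ ^ (μ - 1) * (t - s) < ε := by
    have := (((tendsto_rpow_nhds_zero (sub_pos.2 hμ)).const_mul (sewingConst μ * K)).mul_const
      (t - s)).mono_left (nhdsWithin_le_nhds (s := Set.Ioi 0))
    exact this.eventually (gt_mem_nhds (by simpa using hε))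
  obtain ⟨δ, hδε, hδ⟩ := (hsmall.and self_mem_nhdsWithin).exists
  refine ⟨δ, hδ, fun {π n} hπ h₀ hn hmesh => ?_⟩
  have := norm_riemannSum_sub_sewing_le hμ hK hg₀ hg (monotone_comp_min hπ) (n := n) fun i hi => by
    simpa only [min_eq_left hi.le, min_eq_left (Nat.succ_le_of_lt hi)] using hmesh i hi
  rw [riemannSum_comp_min, min_self, Nat.zero_min, h₀, hn] at this
  exact this.trans_lt hδε

theorem append_succ_sub_le {π₁ π₂ : ℕ → ℝ} {n₁ n₂ : ℕ} (h : π₁ n₁ = π₂ 0) {δ : ℝ}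
    (h₁ : ∀ i < n₁, π₁ (i + 1) - π₁ i ≤ δ) (h₂ : ∀ i < n₂, π₂ (i + 1) - π₂ i ≤ δ) :
    ∀ i < n₁ + n₂, append π₁ n₁ π₂ (i + 1) - append π₁ n₁ π₂ i ≤ δ := by
  intro i hi
  rcases lt_or_ge i n₁ with hin | hin
  · simpa only [append, if_pos (show i + 1 ≤ n₁ by omega), if_pos hin.le] using h₁ i hin
  · have hprev : append π₁ n₁ π₂ i = π₂ (i - n₁) := by
      unfold append
      split_ifs with h'
      · rw [show i = n₁ by omega, h, Nat.sub_self]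
      · rfl
    rw [hprev, append, if_neg (by omega), show i + 1 - n₁ = i - n₁ + 1 by omega]
    exact h₂ _ (by omega)

theorem sewing_add [CompleteSpace V] (hμ : 1 < μ) (hK : 0 ≤ K) (hg₀ : ∀ t, g t t = 0)
    (hg : ∀ s u t, s ≤ u → u ≤ t → ‖increment g t u s‖ ≤ K * (t - s) ^ μ)
    {s u t : ℝ} (hsu : s ≤ u) (hut : u ≤ t) :
    sewing g t s = sewing g t u + sewing g u s := by
  set π := fun m : ℕ =>
    append (uniformPartition s u (m + 1)) (m + 1) (uniformPartition u t (m + 1))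
  have hjoin : ∀ m, uniformPartition s u (m + 1) (m + 1) = uniformPartition u t (m + 1) 0 :=
    fun m => by rw [uniformPartition_self _ _ m.succ_ne_zero, uniformPartition_zero]
  have hclose : ∀ m : ℕ, ‖riemannSum g (π m) (m + 1 + (m + 1)) - sewing g t s‖ ≤
      sewingConst μ * K * ((t - s) / (m + 1 : ℕ)) ^ (μ - 1) * (t - s) := fun m => by
    have hmesh : ∀ v w : ℝ, s ≤ v → w ≤ t → ∀ i, uniformPartition v w (m + 1) (i + 1) -
        uniformPartition v w (m + 1) i ≤ (t - s) / (m + 1 : ℕ) := fun v w hv hw i => by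
      rw [uniformPartition_succ_sub]
      gcongr
    have := norm_riemannSum_sub_sewing_le hμ hK hg₀ hg (n := m + 1 + (m + 1))
      (monotone_append (monotone_uniformPartition hsu _) (monotone_uniformPartition hut _)
        (hjoin m).le)
      (append_succ_sub_le (hjoin m) (fun i _ => hmesh s u le_rfl hut i)
        (fun i _ => hmesh u t hsu le_rfl i))
    simpa [π, append, uniformPartition_zero, uniformPartition_self] using this
  have h₁ : Tendsto (fun m => riemannSum g (π m) (m + 1 + (m + 1))) atTop (𝓝 (sewing g t s)) := by
    rw [tendsto_iff_norm_sub_tendsto_zero]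
    refine squeeze_zero (fun _ => norm_nonneg _) hclose ?_
    simpa using ((tendsto_uniformMesh_rpow hμ (t - s)).const_mul (sewingConst μ * K)).mul_const
      (t - s)
  have h₂ : Tendsto (fun m => riemannSum g (π m) (m + 1 + (m + 1))) atTop
      (𝓝 (sewing g u s + sewing g t u)) := by
    simp only [π, riemannSum_append g (hjoin _)]
    exact (tendsto_riemannSum_uniformPartition hμ hK hg₀ hg hsu).add
      (tendsto_riemannSum_uniformPartition hμ hK hg₀ hg hut)
  rw [tendsto_nhds_unique h₁ h₂, add_comm]

end Limit

section Extension

variable {V : Type*} {T : ℝ} (hT : 0 ≤ T)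

noncomputable def extendIcc (g : ℝ → ℝ → V) : ℝ → ℝ → V :=
  fun t s => g (Set.projIcc 0 T hT t) (Set.projIcc 0 T hT s)

theorem extendIcc_of_mem (g : ℝ → ℝ → V) {s t : ℝ} (hs : s ∈ Set.Icc 0 T)
    (ht : t ∈ Set.Icc 0 T) : extendIcc hT g t s = g t s := by
  simp only [extendIcc, Set.projIcc_of_mem _ hs, Set.projIcc_of_mem _ ht]

theorem extendIcc_self [Zero V] {g : ℝ → ℝ → V} (hg : ∀ t, 0 ≤ t → t ≤ T → g t t = 0) (t : ℝ) :
    extendIcc hT g t t = 0 :=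
  hg _ (Set.projIcc 0 T hT t).2.1 (Set.projIcc 0 T hT t).2.2

theorem riemannSum_extendIcc [AddCommMonoid V] (g : ℝ → ℝ → V) {π : ℕ → ℝ} {n : ℕ}
    (hπ : ∀ i < n, π i ≤ π (i + 1)) (h₀ : 0 ≤ π 0) (hn : π n ≤ T) :
    riemannSum (extendIcc hT g) π n = riemannSum g π n := by
  have hmem : ∀ i ≤ n, π i ∈ Set.Icc 0 T := fun i hi => by
    have h₁ := monotone_comp_min hπ (Nat.zero_le i)
    have h₂ := monotone_comp_min hπ hi
    simp only [min_eq_left hi, Nat.zero_min, min_self] at h₁ h₂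
    exact ⟨h₀.trans h₁, h₂.trans hn⟩
  exact sum_congr rfl fun i hi =>
    extendIcc_of_mem hT g (hmem i (mem_range.1 hi).le) (hmem (i + 1) (mem_range.1 hi))

theorem rpow_mul_rpow_le {s u t ρ μ : ℝ} (hsu : s ≤ u) (hut : u ≤ t) (hρ : 0 ≤ ρ)
    (hρμ : ρ ≤ μ) : (t - u) ^ ρ * (u - s) ^ (μ - ρ) ≤ (t - s) ^ μ := by
  calc (t - u) ^ ρ * (u - s) ^ (μ - ρ) ≤ (t - s) ^ ρ * (t - s) ^ (μ - ρ) := by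
        have := Real.rpow_nonneg (sub_nonneg.2 (hsu.trans hut)) ρ
        gcongr
    _ = (t - s) ^ μ := by
        rw [← Real.rpow_add_of_nonneg (by linarith) hρ (by linarith), add_sub_cancel]

theorem norm_increment_extendIcc_le [SeminormedAddCommGroup V] {g : ℝ → ℝ → V}
    {K μ ρ : ℝ} (hK : 0 ≤ K) (hρ : 0 ≤ ρ) (hρμ : ρ ≤ μ)
    (hg : ∀ s u t, 0 ≤ s → s ≤ u → u ≤ t → t ≤ T →
      ‖g t s - g t u - g u s‖ ≤ K * (t - u) ^ ρ * (u - s) ^ (μ - ρ))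
    {s u t : ℝ} (hsu : s ≤ u) (hut : u ≤ t) :
    ‖increment (extendIcc hT g) t u s‖ ≤ K * (t - s) ^ μ := by
  set p := Set.projIcc 0 T hT
  have hsu' : (p s : ℝ) ≤ p u := Set.monotone_projIcc hT hsu
  have hut' : (p u : ℝ) ≤ p t := Set.monotone_projIcc hT hut
  have hcontract : (p t : ℝ) - p s ≤ t - s :=
    (le_abs_self _).trans ((Set.abs_projIcc_sub_projIcc hT).trans (abs_of_nonneg (by linarith)).le)
  calc _ ≤ K * ((p t : ℝ) - p u) ^ ρ * ((p u : ℝ) - p s) ^ (μ - ρ) :=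
        hg _ _ _ (p s).2.1 hsu' hut' (p t).2.2
    _ ≤ K * ((p t : ℝ) - p s) ^ μ := by
        rw [mul_assoc]
        gcongr
        exact rpow_mul_rpow_le hsu' hut' hρ hρμ
    _ ≤ K * (t - s) ^ μ := by
        gcongr
        · linarith
        · linarith

end Extension

end Sewing

open Sewing

theorem integration_of_small_increments_general
    {V : Type*} [NormedAddCommGroup V] [CompleteSpace V]
    (T : ℝ) (hT : 0 < T) (μ ρ : ℝ) (hμ : 1 < μ) (hρ : 0 < ρ) (hρμ : ρ < μ)
    (g : ℝ → ℝ → V)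
    (hgtt : ∀ t : ℝ, 0 ≤ t → t ≤ T → g t t = 0)
    (K : ℝ) (hK : 0 ≤ K)
    (hbound : ∀ s u t : ℝ, 0 ≤ s → s ≤ u → u ≤ t → t ≤ T →
      ‖g t s - g t u - g u s‖ ≤ K * (t - u) ^ ρ * (u - s) ^ (μ - ρ)) :
    ∃ F : ℝ → ℝ → V,
      -- additivity of the limit
      (∀ s u t : ℝ, 0 ≤ s → s ≤ u → u ≤ t → t ≤ T → F t s = F t u + F u s) ∧
      -- the limit is close to g
      (∀ s t : ℝ, 0 ≤ s → s ≤ t → t ≤ T →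
        ‖F t s - g t s‖ ≤ cSewing μ * K * (t - s) ^ μ) ∧
      -- convergence of Riemann sums along partitions whose mesh tends to zero
      (∀ s t : ℝ, 0 ≤ s → s ≤ t → t ≤ T → ∀ ε : ℝ, 0 < ε → ∃ δ : ℝ, 0 < δ ∧
        ∀ (n : ℕ) (π : ℕ → ℝ), π 0 = s → π n = t →
          (∀ i : ℕ, i < n → π i < π (i + 1)) →
          (∀ i : ℕ, i < n → π (i + 1) - π i < δ) →
          ‖(∑ i ∈ Finset.range n, g (π (i + 1)) (π i)) - F t s‖ < ε) := by
  have hext₀ := extendIcc_self hT.le hgtt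
  have hext : ∀ s u t, s ≤ u → u ≤ t → ‖increment (extendIcc hT.le g) t u s‖ ≤ K * (t - s) ^ μ :=
    fun _ _ _ => norm_increment_extendIcc_le hT.le hK hρ.le hρμ.le hbound
  refine ⟨sewing (extendIcc hT.le g), fun s u t _ hsu hut _ => sewing_add hμ hK hext₀ hext hsu hut,
    fun s t hs hst ht => ?_, fun s t hs hst ht ε hε => ?_⟩
  · rw [← extendIcc_of_mem hT.le g ⟨hs, hst.trans ht⟩ ⟨hs.trans hst, ht⟩]
    refine (norm_sewing_sub_le hμ hK hext₀ hext hst).trans ?_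
    have := Real.rpow_nonneg (sub_nonneg.2 hst) μ
    gcongr
    exact sewingConst_le_cSewing μ
  obtain ⟨δ, hδ, hδε⟩ := exists_forall_norm_riemannSum_sub_sewing_lt hμ hK hext₀ hext s t hε
  refine ⟨δ, hδ, fun n π h₀ hn hπ hmesh => ?_⟩
  have hπ' : ∀ i < n, π i ≤ π (i + 1) := fun i hi => (hπ i hi).le
  rw [← riemannSum, ← riemannSum_extendIcc hT.le g hπ' (h₀ ▸ hs) (hn ▸ ht)]
  exact hδε hπ' h₀ hn fun i hi => (hmesh i hi).le

/-- Integration of small increments. -/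
theorem integration_of_small_increments
    {V : Type*} [NormedAddCommGroup V] [NormedSpace ℝ V] [CompleteSpace V]
    (T : ℝ) (hT : 0 < T) (μ ρ : ℝ) (hμ : 1 < μ) (hρ : 0 < ρ) (hρμ : ρ < μ)
    (g : ℝ → ℝ → V)
    (hcont : ContinuousOn (fun p : ℝ × ℝ => g p.1 p.2)
      {p : ℝ × ℝ | 0 ≤ p.2 ∧ p.2 ≤ p.1 ∧ p.1 ≤ T})
    (hgtt : ∀ t : ℝ, 0 ≤ t → t ≤ T → g t t = 0)
    (K : ℝ) (hK : 0 ≤ K)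
    (hbound : ∀ s u t : ℝ, 0 ≤ s → s ≤ u → u ≤ t → t ≤ T →
      ‖g t s - g t u - g u s‖ ≤ K * (t - u) ^ ρ * (u - s) ^ (μ - ρ)) :
    ∃ F : ℝ → ℝ → V,
      -- additivity of the limit
      (∀ s u t : ℝ, 0 ≤ s → s ≤ u → u ≤ t → t ≤ T → F t s = F t u + F u s) ∧
      -- the limit is close to g
      (∀ s t : ℝ, 0 ≤ s → s ≤ t → t ≤ T →
        ‖F t s - g t s‖ ≤ cSewing μ * K * (t - s) ^ μ) ∧
      -- convergence of Riemann sums along partitions whose mesh tends to zero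
      (∀ s t : ℝ, 0 ≤ s → s ≤ t → t ≤ T → ∀ ε : ℝ, 0 < ε → ∃ δ : ℝ, 0 < δ ∧
        ∀ (n : ℕ) (π : ℕ → ℝ), π 0 = s → π n = t →
          (∀ i : ℕ, i < n → π i < π (i + 1)) →
          (∀ i : ℕ, i < n → π (i + 1) - π i < δ) →
          ‖(∑ i ∈ Finset.range n, g (π (i + 1)) (π i)) - F t s‖ < ε) :=
  integration_of_small_increments_general T hT μ ρ hμ hρ hρμ g hgtt K hK hbound
end

section
/- Garsia–Rodemich–Rumsey inequality for twisted increments. Let (V,‖·‖) be a Banach space, T > 0 and ξ ≥ 0. Let R : {(t,s) : 0 ≤ s ≤ t ≤ T} → V be continuous with R_{tt} = 0 for all t. Let ψ, φ : [0,∞) → [0,∞) be continuous and strictly increasing with ψ(0) = 0, φ(0) = 0 and ψ(x) → ∞ as x → ∞, and set U = ∬_{0<v<w<T} ψ( ‖R_{wv}‖/φ(w−v) ) dv dw. Assume there exists C ≥ 0 such that for all 0 ≤ s < t ≤ T, sup_{s ≤ u ≤ t} ‖R_{ts} − R_{tu} − e^{−ξ(t−u)} R_{us}‖ ≤ ψ^{−1}(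 4C/(t−s)² ) φ(t−s). Then for all 0 ≤ s ≤ t ≤ T, ‖R_{ts}‖ ≤ 8 ∫₀^{t−s} ψ^{−1}(4U/r²) dφ(r) + 9 ∫₀^{t−s} ψ^{−1}(4C/r²) dφ(r), where the integrals are Lebesgue–Stieltjes integrals with respect to the increasing continuous function φ, with values in [0,∞] (the inequality being trivially true when the right-hand side is infinite). -/
open MeasureTheory
open scoped ENNReal

/-- Extension of the inverse `ψ⁻¹` to `[0,∞]`, sending `∞` to `∞`. -/
noncomputable def psiInvE (ψinv : ℝ → ℝ) (y : ℝ≥0∞) : ℝ≥0∞ :=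
  if y = ⊤ then ⊤ else ENNReal.ofReal (ψinv y.toReal)

open Set Filter Topology

/-!
Garsia–Rodemich–Rumsey chaining. Since `e^{-ξ(t-u)} ≤ 1`, the twisted increment bound gives the
quasi-triangle inequality `‖R_ts‖ ≤ ‖R_tu‖ + ‖R_us‖ + K(t - s)`, `K(h) = ψ⁻¹(4C/h²) φ(h)`, and this
is all that is used about the twist. Let `Ψ(w, v) = ψ(‖R_wv‖ / φ(w - v))`. By averaging, some
`u₀ ∈ (s, t)` has both sections `∫ Ψ(u₀, v) dv` and `∫ Ψ(w, u₀) dw` at most `2U/(t - s)`.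
From `u₀` one descends towards `s` along points `τₙ` and scales `dₙ` with
`φ(dₙ₊₁) = φ(τₙ - s)/2`, choosing `τₙ₊₁ ∈ (s, s + dₙ₊₁)` by averaging again, so that
`Ψ(τₙ, τₙ₊₁) ≤ 4U/(dₙ dₙ₊₁)` and hence `‖R_{τₙ τₙ₊₁}‖ ≤ 4 ∫_{dₙ₊₂}^{dₙ₊₁} ψ⁻¹(4U/r²) dφ(r)`,
while `K(τₙ - s) ≤ 2 ∫_{τₙ₊₁ - s}^{τₙ - s} ψ⁻¹(4C/r²) dφ(r)`. Summing the quasi-triangle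
inequality along the chain, and using continuity of `R` at the diagonal, bounds `‖R_{u₀ s}‖`.
The ascent from `u₀` to `t` is the same argument after the reflection `(w, v) ↦ (s+t-v, s+t-w)`
of the triangle, and the step from `(s, t)` to `u₀` costs one more `K(t - s)`: the constants
are `8 = 2·4` and `5 = 2·2 + 1 ≤ 9`.
-/

theorem StrictMonoOn.apply_pos {φ : ℝ → ℝ} (hφ : StrictMonoOn φ (Ici 0)) (hφ0 : φ 0 = 0) {x : ℝ}
    (hx : 0 < x) : 0 < φ x :=
  hφ0 ▸ hφ self_mem_Ici hx.le hx

theorem exists_seq_of_forall_exists {α : Type*} {P : α → Prop} {r : α → α → Prop} {x₀ : α}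
    (h₀ : P x₀) (h : ∀ x, P x → ∃ y, P y ∧ r x y) :
    ∃ f : ℕ → α, f 0 = x₀ ∧ ∀ n, P (f n) ∧ r (f n) (f (n + 1)) := by
  choose! g hgP hgr using h
  have hP : ∀ n, P (g^[n] x₀) := fun n => by
    induction n with
    | zero => exact h₀
    | succ n ih => rw [Function.iterate_succ_apply']; exact hgP _ ih
  refine ⟨fun n => g^[n] x₀, rfl, fun n => ⟨hP n, ?_⟩⟩
  simpa only [Function.iterate_succ_apply'] using hgr _ (hP n)

theorem le_tsum_of_le_add_of_tendsto_zero {x a : ℕ → ℝ≥0∞}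
    (h : ∀ n, x n ≤ a n + x (n + 1)) (hx : Tendsto x atTop (𝓝 0)) : x 0 ≤ ∑' n, a n := by
  have hsum : ∀ m, x 0 ≤ ∑ n ∈ Finset.range m, a n + x m := fun m => by
    induction m with
    | zero => simp
    | succ m ih =>
      rw [Finset.sum_range_succ, add_assoc]
      exact ih.trans (by gcongr; exact h m)
  refine ge_of_tendsto (by simpa using tendsto_const_nhds.add hx) (Eventually.of_forall fun m => ?_)
  exact (hsum m).trans (by gcongr; exact ENNReal.sum_le_tsum _)

theorem tsum_setLIntegral_Ioc_le {μ : Measure ℝ} (f : ℝ → ℝ≥0∞) {a : ℕ → ℝ} {h : ℝ}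
    (ha : Antitone a) (ha_nonneg : ∀ n, 0 ≤ a n) (ha_le : a 0 ≤ h) :
    ∑' n, ∫⁻ r in Ioc (a (n + 1)) (a n), f r ∂μ ≤ ∫⁻ r in Ioc 0 h, f r ∂μ := by
  rw [← lintegral_iUnion (fun n => measurableSet_Ioc)
    (by simpa using ha.pairwise_disjoint_on_Ioc_succ)]
  exact lintegral_mono_set <| iUnion_subset fun n =>
    Ioc_subset_Ioc (ha_nonneg _) ((ha (Nat.zero_le n)).trans ha_le)

theorem tendsto_zero_of_two_mul_le {y : ℕ → ℝ} (hy : ∀ n, 0 ≤ y n) (h : ∀ n, 2 * y (n + 1) ≤ y n) :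
    Tendsto y atTop (𝓝 0) := by
  have hgeom : ∀ n, y n ≤ y 0 * (1 / 2) ^ n := fun n => by
    induction n with
    | zero => simp
    | succ n ih => rw [pow_succ]; linarith [h n]
  have hlim : Tendsto (fun n => y 0 * (1 / 2 : ℝ) ^ n) atTop (𝓝 0) := by
    simpa using (tendsto_pow_atTop_nhds_zero_of_lt_one (r := (1 / 2 : ℝ)) (by norm_num)
      (by norm_num)).const_mul (y 0)
  exact squeeze_zero hy hgeom hlim

theorem StrictMonoOn.tendsto_zero_of_tendsto_comp {φ : ℝ → ℝ} (hφ : StrictMonoOn φ (Ici 0))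
    (hφ0 : φ 0 = 0) {x : ℕ → ℝ} (hx : ∀ n, 0 ≤ x n) (h : Tendsto (fun n => φ (x n)) atTop (𝓝 0)) :
    Tendsto x atTop (𝓝 0) := by
  refine tendsto_order.2 ⟨fun a ha => Eventually.of_forall fun n => ha.trans_le (hx n),
    fun ε hε => ?_⟩
  filter_upwards [(tendsto_order.1 h).2 _ (hφ.apply_pos hφ0 hε)] with n hn
  exact (hφ.lt_iff_lt (hx n) hε.le).1 hn

theorem measure_setOf_two_mul_setLIntegral_lt_lt_half {α : Type*} [MeasurableSpace α]
    {μ : Measure α} {S : Set α} (hS : MeasurableSet S) (hμ0 : μ S ≠ 0) (hμ : μ S ≠ ∞)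
    {G : α → ℝ≥0∞} (hG : Measurable G) :
    μ {x ∈ S | 2 * ∫⁻ y in S, G y ∂μ < μ S * G x} < μ S / 2 := by
  set A := ∫⁻ y in S, G y ∂μ
  set B := {x ∈ S | 2 * A < μ S * G x}
  have hB : MeasurableSet B := hS.inter (measurableSet_lt measurable_const (hG.const_mul _))
  by_contra! hle
  have hB0 : μ B ≠ 0 := ((ENNReal.half_pos hμ0).trans_le hle).ne'
  have hA : A ≠ ∞ := by
    rintro hA
    refine hB0 (measure_mono_null (fun x hx => ?_) measure_empty)
    simp [B, hA] at hx
  have hμB : μ B ≠ ∞ := ne_top_of_le_ne_top hμ (measure_mono (sep_subset _ _))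
  have hlt : 2 * A * μ B < μ S * A := calc
    2 * A * μ B = ∫⁻ _ in B, 2 * A ∂μ := (setLIntegral_const _ _).symm
    _ < ∫⁻ x in B, μ S * G x ∂μ := setLIntegral_strict_mono hB hB0 (hG.const_mul _)
        (by simp [ENNReal.mul_eq_top, hA, hμB]) (ae_of_all _ fun x hx => hx.2)
    _ ≤ ∫⁻ x in S, μ S * G x ∂μ := lintegral_mono_set (sep_subset _ _)
    _ = μ S * A := lintegral_const_mul _ hG
  have hge : μ S * A ≤ 2 * A * μ B := calc
    μ S * A = 2 * (μ S / 2) * A := by rw [ENNReal.mul_div_cancel two_ne_zero ENNReal.ofNat_ne_top]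
    _ ≤ 2 * μ B * A := by gcongr
    _ = 2 * A * μ B := by ring
  exact hlt.not_ge hge

theorem exists_mem_mul_le_two_mul_setLIntegral {α : Type*} [MeasurableSpace α]
    {μ : Measure α} {S : Set α} (hS : MeasurableSet S) (hμ0 : μ S ≠ 0) (hμ : μ S ≠ ∞)
    {G₁ G₂ : α → ℝ≥0∞} (hG₁ : Measurable G₁) (hG₂ : Measurable G₂) :
    ∃ x ∈ S, μ S * G₁ x ≤ 2 * ∫⁻ y in S, G₁ y ∂μ ∧ μ S * G₂ x ≤ 2 * ∫⁻ y in S, G₂ y ∂μ := by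
  have hlt : μ ({x ∈ S | 2 * ∫⁻ y in S, G₁ y ∂μ < μ S * G₁ x} ∪
      {x ∈ S | 2 * ∫⁻ y in S, G₂ y ∂μ < μ S * G₂ x}) < μ S :=
    (measure_union_le _ _).trans_lt <| (ENNReal.add_lt_add
      (measure_setOf_two_mul_setLIntegral_lt_lt_half hS hμ0 hμ hG₁)
      (measure_setOf_two_mul_setLIntegral_lt_lt_half hS hμ0 hμ hG₂)).trans_eq (ENNReal.add_halves _)
  obtain ⟨x, hxS, hx⟩ := not_subset.1 fun hsub => (measure_mono hsub).not_gt hlt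
  simp only [mem_union, mem_ofPred_eq, not_or, not_and, not_lt] at hx
  exact ⟨x, hxS, hx.1 hxS, hx.2 hxS⟩

theorem le_ofReal_div_mul_of_mul_le {x y : ℝ≥0∞} {d d' q : ℝ} (hd : 0 < d) (hd' : 0 < d')
    (h₁ : ENNReal.ofReal d' * x ≤ 2 * y) (h₂ : ENNReal.ofReal d * y ≤ 2 * ENNReal.ofReal q) :
    x ≤ ENNReal.ofReal (4 * q / (d * d')) := by
  rw [ENNReal.ofReal_div_of_pos (mul_pos hd hd'),
    ENNReal.le_div_iff_mul_le (by simp [hd, hd']) (by simp), ENNReal.ofReal_mul hd.le,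
    ENNReal.ofReal_mul (by norm_num)]
  calc x * (ENNReal.ofReal d * ENNReal.ofReal d') = ENNReal.ofReal d * (ENNReal.ofReal d' * x) := by
        ring
    _ ≤ ENNReal.ofReal d * (2 * y) := by gcongr
    _ = 2 * (ENNReal.ofReal d * y) := by ring
    _ ≤ 2 * (2 * ENNReal.ofReal q) := by gcongr
    _ = ENNReal.ofReal 4 * ENNReal.ofReal q := by rw [← mul_assoc]; norm_num

theorem lintegral_lintegral_comp_sub_left {H : ℝ × ℝ → ℝ≥0∞} (hH : Measurable H) (c : ℝ) :
    ∫⁻ w, ∫⁻ v, H (c - v, c - w) = ∫⁻ w, ∫⁻ v, H (w, v) := by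
  calc ∫⁻ w, ∫⁻ v, H (c - v, c - w) = ∫⁻ w, ∫⁻ v, H (v, c - w) :=
        lintegral_congr fun w => lintegral_sub_left_eq_self (fun v => H (v, c - w)) c
    _ = ∫⁻ v, ∫⁻ w, H (v, c - w) := lintegral_lintegral_swap (by fun_prop)
    _ = ∫⁻ w, ∫⁻ v, H (w, v) :=
        lintegral_congr fun v => lintegral_sub_left_eq_self (fun w => H (v, w)) c

theorem StrictMonoOn.monotoneOn_inverse {ψ ψinv : ℝ → ℝ} (hψ : StrictMonoOn ψ (Ici 0))
    (hψψinv : ∀ y, 0 ≤ y → ψ (ψinv y) = y) (hψinv : ∀ y, 0 ≤ y → 0 ≤ ψinv y) :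
    MonotoneOn ψinv (Ici 0) := fun y₁ hy₁ y₂ hy₂ h =>
  (hψ.le_iff_le (hψinv _ hy₁) (hψinv _ hy₂)).1 (by rwa [hψψinv _ hy₁, hψψinv _ hy₂])

theorem norm_le_add_add_of_norm_sub_sub_smul_le {V : Type*} [SeminormedAddCommGroup V]
    [NormedSpace ℝ V] {x y z : V} {a K : ℝ} (ha : |a| ≤ 1) (h : ‖x - y - a • z‖ ≤ K) :
    ‖x‖ ≤ ‖y‖ + ‖z‖ + K :=
  calc ‖x‖ = ‖(x - y - a • z) + y + a • z‖ := by congr 1; abel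
    _ ≤ ‖x - y - a • z‖ + ‖y‖ + ‖a • z‖ := norm_add₃_le
    _ ≤ K + ‖y‖ + ‖z‖ := by
        gcongr
        rw [norm_smul, Real.norm_eq_abs]
        exact mul_le_of_le_one_left (norm_nonneg _) ha
    _ = ‖y‖ + ‖z‖ + K := by ring

noncomputable def grrIntegral (φ : StieltjesFunction ℝ) (ψinv : ℝ → ℝ) (c h : ℝ) : ℝ≥0∞ :=
  ∫⁻ r in Ioc 0 h, ENNReal.ofReal (ψinv (4 * c / r ^ 2)) ∂φ.measure

theorem ofReal_mul_sub_le_setLIntegral (φ : StieltjesFunction ℝ) {ψinv : ℝ → ℝ}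
    (hψ : MonotoneOn ψinv (Ici 0)) {a b c c' : ℝ} (ha : 0 ≤ a) (hab : a ≤ b) (hc : 0 ≤ c)
    (hcb : c * b ^ 2 ≤ 4 * c') :
    ENNReal.ofReal (ψinv c * (φ b - φ a))
      ≤ ∫⁻ r in Ioc a b, ENNReal.ofReal (ψinv (4 * c' / r ^ 2)) ∂φ.measure := by
  rw [ENNReal.ofReal_mul' (sub_nonneg.2 (φ.mono hab)), ← φ.measure_Ioc, ← setLIntegral_const]
  refine setLIntegral_mono' measurableSet_Ioc fun r ⟨har, hrb⟩ => ?_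
  have hr : 0 < r := ha.trans_lt har
  have hcr : c ≤ 4 * c' / r ^ 2 := by
    rw [le_div_iff₀ (by positivity)]
    exact (mul_le_mul_of_nonneg_left (pow_le_pow_left₀ hr.le hrb 2) hc).trans hcb
  exact ENNReal.ofReal_le_ofReal (hψ hc (hc.trans hcr) hcr)

structure GRRChain (s t q : ℝ) (φ : ℝ → ℝ) (H : ℝ × ℝ → ℝ≥0∞) (u₀ : ℝ) where
  τ : ℕ → ℝ
  d : ℕ → ℝ
  τ_zero : τ 0 = u₀
  lt_τ : ∀ n, s < τ n
  τ_sub_lt : ∀ n, τ n - s < d n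
  d_le : ∀ n, d n ≤ t - s
  two_mul_φ_d : ∀ n, 2 * φ (d (n + 1)) = φ (τ n - s)
  H_le : ∀ n, H (τ n, τ (n + 1)) ≤ ENNReal.ofReal (4 * q / (d n * d (n + 1)))

namespace GRRChain

section Basic

variable {s t q : ℝ} {φ : ℝ → ℝ} {H : ℝ × ℝ → ℝ≥0∞} {u₀ : ℝ} (c : GRRChain s t q φ H u₀)

theorem d_pos (n : ℕ) : 0 < c.d n := (sub_pos.2 (c.lt_τ n)).trans (c.τ_sub_lt n)

theorem τ_lt (n : ℕ) : c.τ n < t := by linarith [c.τ_sub_lt n, c.d_le n]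

theorem d_succ_lt (hφ : StrictMonoOn φ (Ici 0)) (hφ0 : φ 0 = 0) (n : ℕ) :
    c.d (n + 1) < c.τ n - s := by
  have hpos := hφ.apply_pos hφ0 (c.d_pos (n + 1))
  refine (hφ.lt_iff_lt (c.d_pos _).le (sub_pos.2 (c.lt_τ n)).le).1 ?_
  linarith [c.two_mul_φ_d n]

theorem τ_succ_lt (hφ : StrictMonoOn φ (Ici 0)) (hφ0 : φ 0 = 0) (n : ℕ) :
    c.τ (n + 1) < c.τ n := by
  linarith [c.τ_sub_lt (n + 1), c.d_succ_lt hφ hφ0 n]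

theorem antitone_d (hφ : StrictMonoOn φ (Ici 0)) (hφ0 : φ 0 = 0) : Antitone c.d :=
  antitone_nat_of_succ_le fun n => by linarith [c.d_succ_lt hφ hφ0 n, c.τ_sub_lt n]

theorem two_mul_φ_le (hφ : StrictMonoOn φ (Ici 0)) (n : ℕ) :
    2 * φ (c.τ (n + 1) - s) ≤ φ (c.τ n - s) := by
  have := hφ.monotoneOn (sub_pos.2 (c.lt_τ (n + 1))).le (c.d_pos _).le (c.τ_sub_lt (n + 1)).le
  linarith [c.two_mul_φ_d n]

theorem tendsto_τ (hφ : StrictMonoOn φ (Ici 0)) (hφ0 : φ 0 = 0) :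
    Tendsto c.τ atTop (𝓝[>] s) := by
  have hnonneg : ∀ n, 0 ≤ c.τ n - s := fun n => (sub_pos.2 (c.lt_τ n)).le
  have hφnonneg : ∀ n, 0 ≤ φ (c.τ n - s) := fun n =>
    hφ0 ▸ hφ.monotoneOn self_mem_Ici (hnonneg n) (hnonneg n)
  have := hφ.tendsto_zero_of_tendsto_comp hφ0 hnonneg
    (tendsto_zero_of_two_mul_le hφnonneg (c.two_mul_φ_le hφ))
  refine tendsto_nhdsWithin_iff.2 ⟨?_, Eventually.of_forall c.lt_τ⟩
  simpa using this.add_const s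

theorem nonempty (hH : Measurable H) (hQ : ∫⁻ w, ∫⁻ v, H (w, v) ≤ ENNReal.ofReal q)
    (hφc : ContinuousOn φ (Ici 0)) (hφ : StrictMonoOn φ (Ici 0)) (hφ0 : φ 0 = 0)
    (hu₀ : u₀ ∈ Ioo s t) (hu₀I : ENNReal.ofReal (t - s) * ∫⁻ v, H (u₀, v) ≤ 2 * ENNReal.ofReal q) :
    Nonempty (GRRChain s t q φ H u₀) := by
  -- A state `(τ, d)` satisfies `d * I τ ≤ 2q`; averaging over `(s, s + d')` both `I` and
  -- `H (τ, ·)` yields the next state and `H (τ, τ') ≤ 2 I τ / d' ≤ 4q / (d d')`.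
  let I : ℝ → ℝ≥0∞ := fun w => ∫⁻ v, H (w, v)
  let P : ℝ × ℝ → Prop := fun p =>
    s < p.1 ∧ p.1 - s < p.2 ∧ p.2 ≤ t - s ∧ ENNReal.ofReal p.2 * I p.1 ≤ 2 * ENNReal.ofReal q
  let r : ℝ × ℝ → ℝ × ℝ → Prop := fun p p' =>
    2 * φ p'.2 = φ (p.1 - s) ∧ ENNReal.ofReal p'.2 * H (p.1, p'.1) ≤ 2 * I p.1
  have hstep : ∀ p, P p → ∃ p', P p' ∧ r p p' := by
    rintro ⟨τ, d⟩ ⟨hτ, hτd, hdt, -⟩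
    have hτs : 0 < τ - s := sub_pos.2 hτ
    have hφτ := hφ.apply_pos hφ0 hτs
    obtain ⟨d', ⟨hd'0, hd'τ⟩, hφd'⟩ : ∃ d' ∈ Ioo 0 (τ - s), φ d' = φ (τ - s) / 2 :=
      intermediate_value_Ioo hτs.le (hφc.mono fun x hx => hx.1)
        (by rw [hφ0]; constructor <;> linarith)
    obtain ⟨v, ⟨hsv, hvd'⟩, hvI, hvH⟩ := exists_mem_mul_le_two_mul_setLIntegral
      (μ := volume) (S := Ioo s (s + d')) measurableSet_Ioo (by simp [hd'0]) (by simp)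
      (hH.lintegral_prod_right' (ν := volume)) (hH.comp measurable_prodMk_left)
    rw [Real.volume_Ioo, add_sub_cancel_left] at hvI hvH
    refine ⟨(v, d'), ⟨hsv, by dsimp only; linarith, by dsimp only; linarith, hvI.trans ?_⟩,
      by dsimp only; linarith, hvH.trans ?_⟩
    · gcongr; exact (setLIntegral_le_lintegral _ _).trans hQ
    · gcongr; exact setLIntegral_le_lintegral _ _
  obtain ⟨f, hf0, hf⟩ := exists_seq_of_forall_exists (P := P) (r := r) (x₀ := (u₀, t - s))
    ⟨hu₀.1, by dsimp only; linarith [hu₀.2], le_rfl, hu₀I⟩ hstep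
  have hd : ∀ n, 0 < (f n).2 := fun n => by linarith [(hf n).1.1, (hf n).1.2.1]
  exact ⟨{ τ := fun n => (f n).1
           d := fun n => (f n).2
           τ_zero := by simp [hf0]
           lt_τ := fun n => (hf n).1.1
           τ_sub_lt := fun n => (hf n).1.2.1
           d_le := fun n => (hf n).1.2.2.1
           two_mul_φ_d := fun n => (hf n).2.1
           H_le := fun n => le_ofReal_div_mul_of_mul_le (hd n) (hd (n + 1)) (hf n).2.2
             (hf n).1.2.2.2 }⟩

end Basic

section Estimates

variable {s t q C u₀ : ℝ} {φ : StieltjesFunction ℝ} {ψinv : ℝ → ℝ} {H : ℝ × ℝ → ℝ≥0∞}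
  {N : ℝ × ℝ → ℝ}

theorem ofReal_link_le (c : GRRChain s t q φ H u₀) (hφ : StrictMonoOn φ (Ici 0)) (hφ0 : φ 0 = 0)
    (hψ : MonotoneOn ψinv (Ici 0)) (hψ_nonneg : ∀ y, 0 ≤ y → 0 ≤ ψinv y) (hq : 0 ≤ q)
    (hHN : ∀ w v, s < v → v < w → w < t → ∀ c, 0 ≤ c → H (w, v) ≤ ENNReal.ofReal c →
      N (w, v) ≤ ψinv c * φ (w - v)) (n : ℕ) :
    ENNReal.ofReal (N (c.τ n, c.τ (n + 1)))
      ≤ 4 * ∫⁻ r in Ioc (c.d (n + 2)) (c.d (n + 1)),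
        ENNReal.ofReal (ψinv (4 * q / r ^ 2)) ∂φ.measure := by
  have hd := c.d_pos
  set κ := 4 * q / (c.d n * c.d (n + 1))
  have hκ : 0 ≤ κ := div_nonneg (by positivity) (mul_pos (hd n) (hd _)).le
  have hNκ := hHN _ _ (c.lt_τ (n + 1)) (c.τ_succ_lt hφ hφ0 n) (c.τ_lt n) κ hκ (c.H_le n)
  have hφ_le : φ (c.τ n - c.τ (n + 1)) ≤ 4 * (φ (c.d (n + 1)) - φ (c.d (n + 2))) := by
    have h₁ : φ (c.τ n - c.τ (n + 1)) ≤ φ (c.τ n - s) := φ.mono (by linarith [c.lt_τ (n + 1)])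
    have h₂ : φ (c.τ (n + 1) - s) ≤ φ (c.d (n + 1)) := φ.mono (c.τ_sub_lt (n + 1)).le
    linarith [c.two_mul_φ_d n, c.two_mul_φ_d (n + 1)]
  have hκd : κ * c.d (n + 1) ^ 2 ≤ 4 * q := by
    rw [div_mul_eq_mul_div, div_le_iff₀ (mul_pos (hd n) (hd _))]
    have := c.antitone_d hφ hφ0 (Nat.le_succ n)
    nlinarith [mul_le_mul_of_nonneg_left this
      (mul_nonneg (by positivity : (0 : ℝ) ≤ 4 * q) (hd (n + 1)).le)]
  calc ENNReal.ofReal (N (c.τ n, c.τ (n + 1)))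
      ≤ ENNReal.ofReal (4 * (ψinv κ * (φ (c.d (n + 1)) - φ (c.d (n + 2))))) := by
        refine ENNReal.ofReal_le_ofReal (hNκ.trans ?_)
        nlinarith [hψ_nonneg κ hκ]
    _ ≤ _ := by
        rw [ENNReal.ofReal_mul (by norm_num), ENNReal.ofReal_ofNat]
        gcongr
        exact ofReal_mul_sub_le_setLIntegral φ hψ (hd _).le (c.antitone_d hφ hφ0 (Nat.le_succ _))
          hκ hκd

theorem ofReal_defect_le (c : GRRChain s t q φ H u₀) (hφ : StrictMonoOn φ (Ici 0)) (hφ0 : φ 0 = 0)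
    (hψ : MonotoneOn ψinv (Ici 0)) (hψ_nonneg : ∀ y, 0 ≤ y → 0 ≤ ψinv y) (hC : 0 ≤ C) (n : ℕ) :
    ENNReal.ofReal (ψinv (4 * C / (c.τ n - s) ^ 2) * φ (c.τ n - s))
      ≤ 2 * ∫⁻ r in Ioc (c.τ (n + 1) - s) (c.τ n - s),
        ENNReal.ofReal (ψinv (4 * C / r ^ 2)) ∂φ.measure := by
  have hτ := fun n => sub_pos.2 (c.lt_τ n)
  have hκ : 0 ≤ 4 * C / (c.τ n - s) ^ 2 := by positivity
  calc ENNReal.ofReal (ψinv (4 * C / (c.τ n - s) ^ 2) * φ (c.τ n - s))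
      ≤ ENNReal.ofReal (2 * (ψinv (4 * C / (c.τ n - s) ^ 2)
          * (φ (c.τ n - s) - φ (c.τ (n + 1) - s)))) := by
        refine ENNReal.ofReal_le_ofReal ?_
        nlinarith [hψ_nonneg _ hκ, c.two_mul_φ_le hφ n]
    _ ≤ _ := by
        rw [ENNReal.ofReal_mul (by norm_num), ENNReal.ofReal_ofNat]
        gcongr
        exact ofReal_mul_sub_le_setLIntegral φ hψ (hτ _).le (by linarith [c.τ_succ_lt hφ hφ0 n])
          hκ (div_mul_cancel₀ _ (pow_ne_zero 2 (hτ n).ne')).le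

theorem ofReal_le (c : GRRChain s t q φ H u₀) (hφ : StrictMonoOn φ (Ici 0)) (hφ0 : φ 0 = 0)
    (hψ : MonotoneOn ψinv (Ici 0)) (hψ_nonneg : ∀ y, 0 ≤ y → 0 ≤ ψinv y) (hq : 0 ≤ q) (hC : 0 ≤ C)
    (hHN : ∀ w v, s < v → v < w → w < t → ∀ c, 0 ≤ c → H (w, v) ≤ ENNReal.ofReal c →
      N (w, v) ≤ ψinv c * φ (w - v))
    (hN : ∀ a u, s < u → u < a → a < t →
      N (a, s) ≤ N (a, u) + N (u, s) + ψinv (4 * C / (a - s) ^ 2) * φ (a - s))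
    (hNc : ContinuousWithinAt N {p | s ≤ p.2 ∧ p.2 ≤ p.1 ∧ p.1 ≤ t} (s, s)) (hN0 : N (s, s) = 0) :
    ENNReal.ofReal (N (u₀, s))
      ≤ 4 * grrIntegral φ ψinv q (t - s) + 2 * grrIntegral φ ψinv C (t - s) := by
  have hstep : ∀ n, ENNReal.ofReal (N (c.τ n, s)) ≤ (ENNReal.ofReal (N (c.τ n, c.τ (n + 1)))
      + ENNReal.ofReal (ψinv (4 * C / (c.τ n - s) ^ 2) * φ (c.τ n - s)))
      + ENNReal.ofReal (N (c.τ (n + 1), s)) := fun n => by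
    refine (ENNReal.ofReal_le_ofReal
      (hN _ _ (c.lt_τ (n + 1)) (c.τ_succ_lt hφ hφ0 n) (c.τ_lt n))).trans ?_
    rw [add_right_comm]
    exact ENNReal.ofReal_add_le.trans (by gcongr; exact ENNReal.ofReal_add_le)
  have hlim : Tendsto (fun n => ENNReal.ofReal (N (c.τ n, s))) atTop (𝓝 0) := by
    have hτ : Tendsto (fun n => (c.τ n, s)) atTop (𝓝[{p | s ≤ p.2 ∧ p.2 ≤ p.1 ∧ p.1 ≤ t}] (s, s)) :=
      tendsto_nhdsWithin_iff.2 ⟨((c.tendsto_τ hφ hφ0).mono_right nhdsWithin_le_nhds).prodMk_nhds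
        tendsto_const_nhds, Eventually.of_forall fun n => ⟨le_rfl, (c.lt_τ n).le, (c.τ_lt n).le⟩⟩
    simpa [hN0] using ENNReal.tendsto_ofReal (hNc.tendsto.comp hτ)
  calc ENNReal.ofReal (N (u₀, s)) = ENNReal.ofReal (N (c.τ 0, s)) := by rw [c.τ_zero]
    _ ≤ ∑' n, (ENNReal.ofReal (N (c.τ n, c.τ (n + 1)))
          + ENNReal.ofReal (ψinv (4 * C / (c.τ n - s) ^ 2) * φ (c.τ n - s))) :=
        le_tsum_of_le_add_of_tendsto_zero hstep hlim
    _ ≤ ∑' n, (4 * ∫⁻ r in Ioc (c.d (n + 2)) (c.d (n + 1)),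
            ENNReal.ofReal (ψinv (4 * q / r ^ 2)) ∂φ.measure
          + 2 * ∫⁻ r in Ioc (c.τ (n + 1) - s) (c.τ n - s),
            ENNReal.ofReal (ψinv (4 * C / r ^ 2)) ∂φ.measure) :=
        ENNReal.tsum_le_tsum fun n => add_le_add (c.ofReal_link_le hφ hφ0 hψ hψ_nonneg hq hHN n)
          (c.ofReal_defect_le hφ hφ0 hψ hψ_nonneg hC n)
    _ ≤ _ := by
        rw [ENNReal.tsum_add, ENNReal.tsum_mul_left, ENNReal.tsum_mul_left]
        gcongr
        · exact tsum_setLIntegral_Ioc_le _ (fun _ _ h => c.antitone_d hφ hφ0 (by omega))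
            (fun n => (c.d_pos _).le) (c.d_le 1)
        · exact tsum_setLIntegral_Ioc_le _ (antitone_nat_of_succ_le fun n => by
              linarith [c.τ_succ_lt hφ hφ0 n]) (fun n => (sub_pos.2 (c.lt_τ n)).le)
            (by linarith [c.τ_lt 0])

end Estimates

end GRRChain

section QuasiTriangle

variable {s t q C u₀ : ℝ} {φ : StieltjesFunction ℝ} {ψinv : ℝ → ℝ} {H : ℝ × ℝ → ℝ≥0∞}
  {N : ℝ × ℝ → ℝ}

theorem ofReal_left_le_grrIntegral (hH : Measurable H)
    (hQ : ∫⁻ w, ∫⁻ v, H (w, v) ≤ ENNReal.ofReal q) (hq : 0 ≤ q) (hC : 0 ≤ C)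
    (hφc : ContinuousOn φ (Ici 0)) (hφ : StrictMonoOn φ (Ici 0)) (hφ0 : φ 0 = 0)
    (hψ : MonotoneOn ψinv (Ici 0)) (hψ_nonneg : ∀ y, 0 ≤ y → 0 ≤ ψinv y)
    (hHN : ∀ w v, s < v → v < w → w < t → ∀ c, 0 ≤ c → H (w, v) ≤ ENNReal.ofReal c →
      N (w, v) ≤ ψinv c * φ (w - v))
    (hN : ∀ a u, s < u → u < a → a < t →
      N (a, s) ≤ N (a, u) + N (u, s) + ψinv (4 * C / (a - s) ^ 2) * φ (a - s))
    (hNc : ContinuousWithinAt N {p | s ≤ p.2 ∧ p.2 ≤ p.1 ∧ p.1 ≤ t} (s, s)) (hN0 : N (s, s) = 0)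
    (hu₀ : u₀ ∈ Ioo s t)
    (hu₀I : ENNReal.ofReal (t - s) * ∫⁻ v, H (u₀, v) ≤ 2 * ENNReal.ofReal q) :
    ENNReal.ofReal (N (u₀, s))
      ≤ 4 * grrIntegral φ ψinv q (t - s) + 2 * grrIntegral φ ψinv C (t - s) :=
  (GRRChain.nonempty hH hQ hφc hφ hφ0 hu₀ hu₀I).some.ofReal_le hφ hφ0 hψ hψ_nonneg hq hC hHN hN
    hNc hN0

theorem ofReal_right_le_grrIntegral (hH : Measurable H)
    (hQ : ∫⁻ w, ∫⁻ v, H (w, v) ≤ ENNReal.ofReal q) (hq : 0 ≤ q) (hC : 0 ≤ C)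
    (hφc : ContinuousOn φ (Ici 0)) (hφ : StrictMonoOn φ (Ici 0)) (hφ0 : φ 0 = 0)
    (hψ : MonotoneOn ψinv (Ici 0)) (hψ_nonneg : ∀ y, 0 ≤ y → 0 ≤ ψinv y)
    (hHN : ∀ w v, s < v → v < w → w < t → ∀ c, 0 ≤ c → H (w, v) ≤ ENNReal.ofReal c →
      N (w, v) ≤ ψinv c * φ (w - v))
    (hN : ∀ a u b, s ≤ b → b < u → u < a → a ≤ t →
      N (a, b) ≤ N (a, u) + N (u, b) + ψinv (4 * C / (a - b) ^ 2) * φ (a - b))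
    (hNc : ContinuousWithinAt N {p | s ≤ p.2 ∧ p.2 ≤ p.1 ∧ p.1 ≤ t} (t, t)) (hN0 : N (t, t) = 0)
    (hu₀ : u₀ ∈ Ioo s t)
    (hu₀J : ENNReal.ofReal (t - s) * ∫⁻ w, H (w, u₀) ≤ 2 * ENNReal.ofReal q) :
    ENNReal.ofReal (N (t, u₀))
      ≤ 4 * grrIntegral φ ψinv q (t - s) + 2 * grrIntegral φ ψinv C (t - s) := by
  -- `ρ` maps the triangle `s ≤ v ≤ w ≤ t` onto itself, exchanging the corners `(s, s)`, `(t, t)`.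
  let ρ : ℝ × ℝ → ℝ × ℝ := fun p => (s + t - p.2, s + t - p.1)
  have hρ : Continuous ρ := by fun_prop
  have key := ofReal_left_le_grrIntegral (s := s) (t := t) (N := N ∘ ρ) (u₀ := s + t - u₀)
    (hH.comp hρ.measurable)
    ((lintegral_lintegral_comp_sub_left hH (s + t)).trans_le hQ) hq hC hφc hφ hφ0 hψ hψ_nonneg
    (fun w v hv hvw hwt c hc hHc => by
      have := hHN (s + t - v) (s + t - w) (by linarith) (by linarith) (by linarith) c hc hHc
      rwa [show s + t - v - (s + t - w) = w - v by ring] at this)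
    (fun a u hu hua hat => by
      have := hN (s + t - s) (s + t - u) (s + t - a) (by linarith) (by linarith) (by linarith)
        (by linarith)
      rw [show s + t - s - (s + t - a) = a - s by ring] at this
      simp only [Function.comp_apply, ρ]
      linarith)
    (hNc.comp_of_eq hρ.continuousWithinAt (fun p ⟨h₁, h₂, h₃⟩ => by
      simp only [mem_ofPred_eq, ρ]; constructor <;> [skip; constructor] <;> linarith) (by simp [ρ]))
    (by simp [ρ, hN0]) ⟨by linarith [hu₀.2], by linarith [hu₀.1]⟩
    (by simpa [ρ, lintegral_sub_left_eq_self (fun w => H (w, u₀)) (s + t)] using hu₀J)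
  simpa [ρ] using key

theorem ofReal_le_grrIntegral_of_quasiTriangle (hst : s < t) (hH : Measurable H)
    (hQ : ∫⁻ w, ∫⁻ v, H (w, v) ≤ ENNReal.ofReal q) (hq : 0 ≤ q) (hC : 0 ≤ C)
    (hφc : ContinuousOn φ (Ici 0)) (hφ : StrictMonoOn φ (Ici 0)) (hφ0 : φ 0 = 0)
    (hψ : MonotoneOn ψinv (Ici 0)) (hψ_nonneg : ∀ y, 0 ≤ y → 0 ≤ ψinv y)
    (hHN : ∀ w v, s < v → v < w → w < t → ∀ c, 0 ≤ c → H (w, v) ≤ ENNReal.ofReal c →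
      N (w, v) ≤ ψinv c * φ (w - v))
    (hN : ∀ a u b, s ≤ b → b < u → u < a → a ≤ t →
      N (a, b) ≤ N (a, u) + N (u, b) + ψinv (4 * C / (a - b) ^ 2) * φ (a - b))
    (hNs : ContinuousWithinAt N {p | s ≤ p.2 ∧ p.2 ≤ p.1 ∧ p.1 ≤ t} (s, s)) (hNs0 : N (s, s) = 0)
    (hNt : ContinuousWithinAt N {p | s ≤ p.2 ∧ p.2 ≤ p.1 ∧ p.1 ≤ t} (t, t)) (hNt0 : N (t, t) = 0) :
    ENNReal.ofReal (N (t, s))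
      ≤ 8 * grrIntegral φ ψinv q (t - s) + 5 * grrIntegral φ ψinv C (t - s) := by
  obtain ⟨u₀, hu₀, hu₀I, hu₀J⟩ := exists_mem_mul_le_two_mul_setLIntegral (μ := volume)
    (S := Ioo s t) measurableSet_Ioo (by simp [hst]) (by simp)
    (hH.lintegral_prod_right' (ν := volume))
    (hH.lintegral_prod_left' (μ := volume))
  rw [Real.volume_Ioo] at hu₀I hu₀J
  have hQ' : ∫⁻ v, ∫⁻ w, H (w, v) ≤ ENNReal.ofReal q :=
    (lintegral_lintegral_swap (f := fun w v => H (w, v)) hH.aemeasurable).symm.trans_le hQ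
  have hleft := ofReal_left_le_grrIntegral hH hQ hq hC hφc hφ hφ0 hψ hψ_nonneg hHN
    (fun a u hu hua hat => hN a u s le_rfl hu hua hat.le) hNs hNs0 hu₀
    (hu₀I.trans (by gcongr; exact (setLIntegral_le_lintegral _ _).trans hQ))
  have hright := ofReal_right_le_grrIntegral hH hQ hq hC hφc hφ hφ0 hψ hψ_nonneg hHN hN hNt hNt0 hu₀
    (hu₀J.trans (by gcongr; exact (setLIntegral_le_lintegral _ _).trans hQ'))
  have htop : ENNReal.ofReal (ψinv (4 * C / (t - s) ^ 2) * φ (t - s))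
      ≤ grrIntegral φ ψinv C (t - s) := by
    simpa [hφ0, grrIntegral] using ofReal_mul_sub_le_setLIntegral φ hψ le_rfl (sub_pos.2 hst).le
      (by positivity : 0 ≤ 4 * C / (t - s) ^ 2)
      (div_mul_cancel₀ _ (pow_ne_zero 2 (sub_pos.2 hst).ne')).le
  calc ENNReal.ofReal (N (t, s))
      ≤ ENNReal.ofReal (N (t, u₀)) + ENNReal.ofReal (N (u₀, s))
        + ENNReal.ofReal (ψinv (4 * C / (t - s) ^ 2) * φ (t - s)) :=
        (ENNReal.ofReal_le_ofReal (hN t u₀ s le_rfl hu₀.1 hu₀.2 le_rfl)).trans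
          (ENNReal.ofReal_add_le.trans (by gcongr; exact ENNReal.ofReal_add_le))
    _ ≤ (4 * grrIntegral φ ψinv q (t - s) + 2 * grrIntegral φ ψinv C (t - s))
        + (4 * grrIntegral φ ψinv q (t - s) + 2 * grrIntegral φ ψinv C (t - s))
        + grrIntegral φ ψinv C (t - s) := by gcongr
    _ = 8 * grrIntegral φ ψinv q (t - s) + 5 * grrIntegral φ ψinv C (t - s) := by ring

end QuasiTriangle

noncomputable def grrDensity (s t : ℝ) (ψ φ : ℝ → ℝ) (N : ℝ × ℝ → ℝ) : ℝ × ℝ → ℝ≥0∞ :=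
  {p | s < p.2 ∧ p.2 < p.1 ∧ p.1 < t}.indicator fun p => ENNReal.ofReal (ψ (N p / φ (p.1 - p.2)))

section GRRDensity

variable {s t : ℝ} {ψ φ : ℝ → ℝ} {N : ℝ × ℝ → ℝ}

theorem measurable_grrDensity (hN : ContinuousOn N {p | s ≤ p.2 ∧ p.2 ≤ p.1 ∧ p.1 ≤ t})
    (hN0 : ∀ p, 0 ≤ N p) (hψ : ContinuousOn ψ (Ici 0)) (hφc : ContinuousOn φ (Ici 0))
    (hφ : StrictMonoOn φ (Ici 0)) (hφ0 : φ 0 = 0) : Measurable (grrDensity s t ψ φ N) := by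
  classical
  set E := {p : ℝ × ℝ | s < p.2 ∧ p.2 < p.1 ∧ p.1 < t}
  have hE : IsOpen E := (isOpen_lt continuous_const continuous_snd).inter
    ((isOpen_lt continuous_snd continuous_fst).inter (isOpen_lt continuous_fst continuous_const))
  have hφpos : ∀ p ∈ E, 0 < φ (p.1 - p.2) := fun p hp => hφ.apply_pos hφ0 (sub_pos.2 hp.2.1)
  have hφE : ContinuousOn (fun p : ℝ × ℝ => φ (p.1 - p.2)) E :=
    hφc.comp (by fun_prop) fun p hp => (sub_pos.2 hp.2.1).le
  have hEΔ : E ⊆ {p | s ≤ p.2 ∧ p.2 ≤ p.1 ∧ p.1 ≤ t} := fun p ⟨h₁, h₂, h₃⟩ => ⟨h₁.le, h₂.le, h₃.le⟩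
  have hf : ContinuousOn (fun p => ENNReal.ofReal (ψ (N p / φ (p.1 - p.2)))) E :=
    ENNReal.continuous_ofReal.comp_continuousOn <| hψ.comp
      ((hN.mono hEΔ).div hφE fun p hp => (hφpos p hp).ne')
      fun p hp => div_nonneg (hN0 p) (hφpos p hp).le
  rw [grrDensity, ← piecewise_eq_indicator]
  exact hf.measurable_piecewise continuousOn_const hE.measurableSet

theorem lintegral_lintegral_grrDensity_le {T : ℝ} (hs : 0 ≤ s) (htT : t ≤ T) :
    ∫⁻ w, ∫⁻ v, grrDensity s t ψ φ N (w, v)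
      ≤ ∫⁻ w in Ioo 0 T, ∫⁻ v in Ioo 0 w, ENNReal.ofReal (ψ (N (w, v) / φ (w - v))) := by
  rw [← lintegral_indicator measurableSet_Ioo]
  refine lintegral_mono fun w => ?_
  by_cases hw : w ∈ Ioo 0 T
  · rw [indicator_of_mem hw, ← lintegral_indicator measurableSet_Ioo]
    refine lintegral_mono fun v => indicator_apply_le' (fun ⟨hsv, hvw, _⟩ => ?_) fun _ => zero_le
    have hv : v ∈ Ioo 0 w := ⟨hs.trans_lt hsv, hvw⟩
    rw [indicator_of_mem hv]
  · rw [indicator_of_notMem hw]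
    refine (lintegral_mono fun v => (indicator_of_notMem ?_ _).le).trans (by simp)
    rintro ⟨hsv, hvw, hwt⟩
    exact hw ⟨by linarith, by linarith⟩

theorem le_mul_of_grrDensity_le {ψinv : ℝ → ℝ} (hψ : StrictMonoOn ψ (Ici 0))
    (hψψinv : ∀ y, 0 ≤ y → ψ (ψinv y) = y) (hψinv : ∀ y, 0 ≤ y → 0 ≤ ψinv y)
    (hφ : StrictMonoOn φ (Ici 0)) (hφ0 : φ 0 = 0) (hN0 : ∀ p, 0 ≤ N p) {w v : ℝ}
    (hv : s < v) (hvw : v < w) (hwt : w < t) {c : ℝ} (hc : 0 ≤ c)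
    (h : grrDensity s t ψ φ N (w, v) ≤ ENNReal.ofReal c) : N (w, v) ≤ ψinv c * φ (w - v) := by
  have hφpos := hφ.apply_pos hφ0 (sub_pos.2 hvw)
  rw [grrDensity, indicator_of_mem (show (w, v) ∈ {p : ℝ × ℝ | s < p.2 ∧ p.2 < p.1 ∧ p.1 < t}
    from ⟨hv, hvw, hwt⟩), ENNReal.ofReal_le_ofReal_iff hc] at h
  rw [← div_le_iff₀ hφpos, ← hψ.le_iff_le (div_nonneg (hN0 _) hφpos.le) (hψinv c hc),
    hψψinv c hc]
  exact h

end GRRDensity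

theorem lintegral_psiInvE_eq_grrIntegral (φ : StieltjesFunction ℝ) (ψinv : ℝ → ℝ) {U : ℝ≥0∞}
    (hU : U ≠ ⊤) (h : ℝ) :
    ∫⁻ r in Ioc 0 h, psiInvE ψinv (4 * U / ENNReal.ofReal (r ^ 2)) ∂φ.measure
      = grrIntegral φ ψinv U.toReal h := by
  refine setLIntegral_congr_fun measurableSet_Ioc fun r hr => ?_
  have hr2 : 0 < r ^ 2 := pow_pos hr.1 2
  rw [psiInvE,
    if_neg (ENNReal.div_ne_top (ENNReal.mul_ne_top (by simp) hU) (by simpa using hr.1.ne')),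
    ENNReal.toReal_div, ENNReal.toReal_mul, ENNReal.toReal_ofReal hr2.le]
  norm_num

theorem lintegral_psiInvE_top (φ : StieltjesFunction ℝ) (ψinv : ℝ → ℝ) {h : ℝ}
    (hφ : φ.measure (Ioc 0 h) ≠ 0) :
    ∫⁻ r in Ioc 0 h, psiInvE ψinv (4 * ⊤ / ENNReal.ofReal (r ^ 2)) ∂φ.measure = ⊤ := by
  rw [φ.measure_Ioc] at hφ
  simp [psiInvE, ENNReal.top_div, hφ]

theorem grr_twisted_increments_general
    {V : Type*} [NormedAddCommGroup V] [NormedSpace ℝ V]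
    (T : ℝ) (ξ : ℝ) (hξ : 0 ≤ ξ)
    (R : ℝ → ℝ → V)
    (hRcont : ContinuousOn (fun p : ℝ × ℝ => R p.1 p.2)
      {p : ℝ × ℝ | 0 ≤ p.2 ∧ p.2 ≤ p.1 ∧ p.1 ≤ T})
    (hRtt : ∀ t : ℝ, 0 ≤ t → t ≤ T → R t t = 0)
    (ψ : ℝ → ℝ) (φ : StieltjesFunction ℝ)
    (hψcont : ContinuousOn ψ (Set.Ici 0)) (hψmono : StrictMonoOn ψ (Set.Ici 0))
    (hφcont : ContinuousOn φ (Set.Ici 0)) (hφmono : StrictMonoOn φ (Set.Ici 0))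
    (hφ0 : φ 0 = 0)
    -- ψ⁻¹ : the inverse of ψ on [0,∞)
    (ψinv : ℝ → ℝ)
    (hψinv2 : ∀ y : ℝ, 0 ≤ y → ψ (ψinv y) = y)
    (hψinv3 : ∀ y : ℝ, 0 ≤ y → 0 ≤ ψinv y)
    (C : ℝ) (hC : 0 ≤ C)
    (hδR : ∀ s t : ℝ, 0 ≤ s → s < t → t ≤ T → ∀ u : ℝ, s ≤ u → u ≤ t →
      ‖R t s - R t u - Real.exp (-ξ * (t - u)) • R u s‖
        ≤ ψinv (4 * C / (t - s) ^ 2) * φ (t - s)) :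
    ∀ s t : ℝ, 0 ≤ s → s ≤ t → t ≤ T →
      ENNReal.ofReal ‖R t s‖
        ≤ 8 * ∫⁻ r in Set.Ioc (0 : ℝ) (t - s),
              psiInvE ψinv
                (4 * (∫⁻ w in Set.Ioo (0 : ℝ) T, ∫⁻ v in Set.Ioo (0 : ℝ) w,
                        ENNReal.ofReal (ψ (‖R w v‖ / φ (w - v))))
                  / ENNReal.ofReal (r ^ 2)) ∂φ.measure
          + 9 * ∫⁻ r in Set.Ioc (0 : ℝ) (t - s),
              ENNReal.ofReal (ψinv (4 * C / r ^ 2)) ∂φ.measure := by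
  intro s t hs hst htT
  obtain rfl | hlt := hst.eq_or_lt
  · simp [hRtt s hs htT]
  set U := ∫⁻ w in Ioo (0 : ℝ) T, ∫⁻ v in Ioo (0 : ℝ) w, ENNReal.ofReal (ψ (‖R w v‖ / φ (w - v)))
  obtain hU | hU := eq_or_ne U ⊤
  · rw [hU, lintegral_psiInvE_top φ ψinv
      (by simpa [hφ0] using hφmono.apply_pos hφ0 (sub_pos.2 hlt))]
    simp
  have hNc : ContinuousOn (fun p : ℝ × ℝ => ‖R p.1 p.2‖) {p | s ≤ p.2 ∧ p.2 ≤ p.1 ∧ p.1 ≤ t} :=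
    hRcont.norm.mono fun p ⟨h₁, h₂, h₃⟩ => ⟨hs.trans h₁, h₂, h₃.trans htT⟩
  have hN0 : ∀ p : ℝ × ℝ, 0 ≤ ‖R p.1 p.2‖ := fun _ => norm_nonneg _
  have key := ofReal_le_grrIntegral_of_quasiTriangle (N := fun p => ‖R p.1 p.2‖) (q := U.toReal)
    (H := grrDensity s t ψ φ fun p => ‖R p.1 p.2‖) hlt
    (measurable_grrDensity hNc hN0 hψcont hφcont hφmono hφ0)
    ((lintegral_lintegral_grrDensity_le hs htT).trans_eq (ENNReal.ofReal_toReal hU).symm)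
    ENNReal.toReal_nonneg hC hφcont hφmono hφ0 (hψmono.monotoneOn_inverse hψinv2 hψinv3) hψinv3
    (fun w v hv hvw hwt c hc => le_mul_of_grrDensity_le hψmono hψinv2 hψinv3 hφmono hφ0 hN0 hv
      hvw hwt hc)
    (fun a u b hb hbu hua hat => norm_le_add_add_of_norm_sub_sub_smul_le
      (by rw [abs_of_pos (Real.exp_pos _), Real.exp_le_one_iff]; nlinarith)
      (hδR b a (hs.trans hb) (hbu.trans hua) (hat.trans htT) u hbu.le hua.le))
    (hNc _ ⟨le_rfl, le_rfl, hlt.le⟩) (by simp [hRtt s hs (hlt.le.trans htT)])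
    (hNc _ ⟨hlt.le, le_rfl, le_rfl⟩) (by simp [hRtt t (hs.trans hlt.le) htT])
  rw [lintegral_psiInvE_eq_grrIntegral φ ψinv hU]
  exact key.trans (add_le_add le_rfl (by unfold grrIntegral; gcongr; norm_num))

/-- Garsia–Rodemich–Rumsey inequality for twisted increments.
The increasing function `φ` is encoded as a Stieltjes function (monotone,
right-continuous), so that the Lebesgue–Stieltjes integrals `∫ … dφ(r)` are
integrals against `φ.measure`; they take values in `[0,∞]`. -/
theorem grr_twisted_increments
    {V : Type*} [NormedAddCommGroup V] [NormedSpace ℝ V] [CompleteSpace V]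
    (T : ℝ) (hT : 0 < T) (ξ : ℝ) (hξ : 0 ≤ ξ)
    (R : ℝ → ℝ → V)
    (hRcont : ContinuousOn (fun p : ℝ × ℝ => R p.1 p.2)
      {p : ℝ × ℝ | 0 ≤ p.2 ∧ p.2 ≤ p.1 ∧ p.1 ≤ T})
    (hRtt : ∀ t : ℝ, 0 ≤ t → t ≤ T → R t t = 0)
    (ψ : ℝ → ℝ) (φ : StieltjesFunction ℝ)
    (hψcont : ContinuousOn ψ (Set.Ici 0)) (hψmono : StrictMonoOn ψ (Set.Ici 0))
    (hψ0 : ψ 0 = 0) (hψtop : Filter.Tendsto ψ Filter.atTop Filter.atTop)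
    (hφcont : ContinuousOn φ (Set.Ici 0)) (hφmono : StrictMonoOn φ (Set.Ici 0))
    (hφ0 : φ 0 = 0)
    -- ψ⁻¹ : the inverse of ψ on [0,∞)
    (ψinv : ℝ → ℝ)
    (hψinv1 : ∀ x : ℝ, 0 ≤ x → ψinv (ψ x) = x)
    (hψinv2 : ∀ y : ℝ, 0 ≤ y → ψ (ψinv y) = y)
    (hψinv3 : ∀ y : ℝ, 0 ≤ y → 0 ≤ ψinv y)
    (C : ℝ) (hC : 0 ≤ C)
    (hδR : ∀ s t : ℝ, 0 ≤ s → s < t → t ≤ T → ∀ u : ℝ, s ≤ u → u ≤ t →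
      ‖R t s - R t u - Real.exp (-ξ * (t - u)) • R u s‖
        ≤ ψinv (4 * C / (t - s) ^ 2) * φ (t - s)) :
    ∀ s t : ℝ, 0 ≤ s → s ≤ t → t ≤ T →
      ENNReal.ofReal ‖R t s‖
        ≤ 8 * ∫⁻ r in Set.Ioc (0 : ℝ) (t - s),
              psiInvE ψinv
                (4 * (∫⁻ w in Set.Ioo (0 : ℝ) T, ∫⁻ v in Set.Ioo (0 : ℝ) w,
                        ENNReal.ofReal (ψ (‖R w v‖ / φ (w - v))))
                  / ENNReal.ofReal (r ^ 2)) ∂φ.measure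
          + 9 * ∫⁻ r in Set.Ioc (0 : ℝ) (t - s),
              ENNReal.ofReal (ψinv (4 * C / r ^ 2)) ∂φ.measure :=
  grr_twisted_increments_general T ξ hξ R hRcont hRtt ψ φ hψcont hψmono hφcont hφmono hφ0 ψinv
    hψinv2 hψinv3 C hC hδR
end

section
/- Composition of a controlled path with a regular function. Let n, k, l ≥ 1, 0 < κ ≤ γ < 1, T > 0, I = [a,b] ⊆ [0,T]. Let x¹ assign to each s ≤ t in I a matrix x¹_{ts} ∈ ℝ^{1×n} with K_x := sup_{s<t} ‖x¹_{ts}‖/(t−s)^γ < ∞. Let z : I → ℝ^k be a controlled path: z_t − z_s = (x¹_{ts} ζ_s)ᵀ + r_{ts} with ζ : I → ℝ^{n×k} κ-Hölder and ‖r_{ts}‖ ≤ N_r (t−s)^{2κ}; set N[z;Q^κ] = N[z;C^κ] + N[ζ;C⁰] + N[ζ;C^κ] + N[r;C^{2κ}]. Let σ : ℝ^k → ℝ^l be twice continuously differentiable with sup‖Dσ‖ and sup‖D²σ‖ finite. Define ζ̂_s = ζ_s (Dσ(z_s))ᵀ ∈ ℝ^{n×l} and r̂_{ts} = Dσ(z_s)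 r_{ts} + [ σ(z_t) − σ(z_s) − Dσ(z_s)(z_t − z_s) ]. Then σ(z)_t − σ(z)_s = (x¹_{ts} ζ̂_s)ᵀ + r̂_{ts} for all s ≤ t in I, and there is a constant c depending only on sup‖Dσ‖ and sup‖D²σ‖ such that N[σ(z);C^κ] + N[ζ̂;C⁰] + N[ζ̂;C^κ] + N[r̂;C^{2κ}] ≤ c ( 1 + N[z;Q^κ]² ). -/
open MeasureTheory Matrix
open scoped ENNReal

attribute [local instance] Matrix.normedAddCommGroup Matrix.normedSpace

/-- The Jacobian matrix `Dσ(v) ∈ ℝ^{l×k}` of a map `σ : ℝ^k → ℝ^l`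
(column vectors being encoded as `k×1` matrices). -/
noncomputable def jacobian {k l : ℕ}
    (σ : Matrix (Fin k) (Fin 1) ℝ → Matrix (Fin l) (Fin 1) ℝ)
    (v : Matrix (Fin k) (Fin 1) ℝ) : Matrix (Fin l) (Fin k) ℝ :=
  Matrix.of fun i j => fderiv ℝ σ v (Matrix.single j 0 1) i 0

/-!
With `ζ̂ = ζ (Dσ(z))ᵀ` the decomposition of `σ(z)` is pure algebra: `Dσ(z_s)` applied to
`δz = (x¹ζ)ᵀ + r` gives `(x¹ζ̂)ᵀ + Dσ(z_s) r`, and `r̂` collects the rest. For the bounds,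
`σ(z)` is Hölder because `σ` is `sup‖Dσ‖`-Lipschitz; `ζ̂` is bounded and Hölder because `Dσ` is
bounded and `sup‖D²σ‖`-Lipschitz; and `r̂` is `O((t-s)^{2κ})` because the second-order Taylor
remainder of `σ` is at most `sup‖D²σ‖ ‖δz‖²`. The only quadratic terms, `‖ζ‖ ‖δz‖` and `‖δz‖²`,
produce the square in `1 + N[z;Q^κ]²`.
-/

section MatrixNorm

variable {m n p : Type*} [Fintype m] [Fintype n] [Fintype p]

theorem Matrix.norm_mul_le_card_mul_norm_mul_norm (A : Matrix m n ℝ) (B : Matrix n p ℝ) :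
    ‖A * B‖ ≤ Fintype.card n * ‖A‖ * ‖B‖ := by
  refine (Matrix.norm_le_iff (by positivity)).2 fun i j => ?_
  calc ‖(A * B) i j‖ ≤ ∑ c, ‖A i c‖ * ‖B c j‖ := by
        simpa only [Matrix.mul_apply, norm_mul] using norm_sum_le Finset.univ fun c => A i c * B c j
    _ ≤ ∑ _c : n, ‖A‖ * ‖B‖ := by
        gcongr <;> exact Matrix.norm_entry_le_entrywise_sup_norm _
    _ = Fintype.card n * ‖A‖ * ‖B‖ := by simp [mul_assoc]

theorem Matrix.norm_mul_sub_mul_le (A A' : Matrix m n ℝ) (B B' : Matrix n p ℝ) :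
    ‖A' * B' - A * B‖ ≤ Fintype.card n * (‖A' - A‖ * ‖B'‖ + ‖A‖ * ‖B' - B‖) := by
  have hsplit : A' * B' - A * B = (A' - A) * B' + A * (B' - B) := by
    rw [Matrix.sub_mul, Matrix.mul_sub]; abel
  calc ‖A' * B' - A * B‖ ≤ ‖(A' - A) * B'‖ + ‖A * (B' - B)‖ := hsplit ▸ norm_add_le _ _
    _ ≤ Fintype.card n * ‖A' - A‖ * ‖B'‖ + Fintype.card n * ‖A‖ * ‖B' - B‖ :=
        add_le_add (norm_mul_le_card_mul_norm_mul_norm _ _) (norm_mul_le_card_mul_norm_mul_norm _ _)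
    _ = _ := by ring

end MatrixNorm

/- `Matrix.normedSpace` does not unfold reducibly to the module structure of matrices, so instance
search does not find the operator norm on maps between matrix spaces by itself. -/
noncomputable instance Matrix.instNormedAddCommGroupContinuousLinearMap
    {m n p q : Type*} [Fintype m] [Fintype n] [Fintype p] [Fintype q] :
    NormedAddCommGroup (Matrix m n ℝ →L[ℝ] Matrix p q ℝ) :=
  ContinuousLinearMap.toNormedAddCommGroup

section StdMatrix

variable {m n : Type*} [DecidableEq n]

def ContinuousLinearMap.stdMatrix (f : Matrix n (Fin 1) ℝ →L[ℝ] Matrix m (Fin 1) ℝ) :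
    Matrix m n ℝ :=
  Matrix.of fun i j => f (Matrix.single j 0 1) i 0

namespace ContinuousLinearMap

variable (f g : Matrix n (Fin 1) ℝ →L[ℝ] Matrix m (Fin 1) ℝ)

theorem stdMatrix_sub : (f - g).stdMatrix = f.stdMatrix - g.stdMatrix := rfl

variable [Fintype n]

theorem stdMatrix_mul (w : Matrix n (Fin 1) ℝ) : f.stdMatrix * w = f w := by
  have hw : w = ∑ c, w c 0 • Matrix.single c (0 : Fin 1) (1 : ℝ) := by
    ext i j
    fin_cases j
    simp [Matrix.sum_apply, Matrix.single]
  conv_rhs => rw [hw, map_sum]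
  simp_rw [map_smul]
  ext i j
  fin_cases j
  simp [stdMatrix, Matrix.mul_apply, Matrix.sum_apply, mul_comm]

variable [Fintype m]

theorem norm_stdMatrix_le : ‖f.stdMatrix‖ ≤ ‖f‖ := by
  refine (Matrix.norm_le_iff (norm_nonneg _)).2 fun i j => ?_
  have hsingle : ‖(Matrix.single j (0 : Fin 1) (1 : ℝ))‖ ≤ 1 :=
    (Matrix.norm_le_iff zero_le_one).2 fun i' j' => by
      simp only [Matrix.single, Matrix.of_apply]; split_ifs <;> simp
  calc ‖f (Matrix.single j 0 1) i 0‖ ≤ ‖f (Matrix.single j 0 1)‖ :=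
        Matrix.norm_entry_le_entrywise_sup_norm _
    _ ≤ ‖f‖ * 1 := f.le_opNorm_of_le hsingle
    _ = ‖f‖ := mul_one _

end ContinuousLinearMap

end StdMatrix

section BoundedDerivatives

variable {E F : Type*} [NormedAddCommGroup E] [NormedSpace ℝ E]
  [NormedAddCommGroup F] [NormedSpace ℝ F] {f : E → F} {L1 L2 : ℝ}

theorem norm_sub_le_of_norm_fderiv_le (hf : Differentiable ℝ f) (hL1 : ∀ v, ‖fderiv ℝ f v‖ ≤ L1)
    (x y : E) : ‖f y - f x‖ ≤ L1 * ‖y - x‖ :=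
  convex_univ.norm_image_sub_le_of_norm_fderiv_le (fun u _ => hf u) (fun u _ => hL1 u)
    (Set.mem_univ x) (Set.mem_univ y)

theorem norm_fderiv_sub_le_of_norm_iteratedFDeriv_two_le (hf : ContDiff ℝ 2 f)
    (hL2 : ∀ v, ‖iteratedFDeriv ℝ 2 f v‖ ≤ L2) (x y : E) :
    ‖fderiv ℝ f y - fderiv ℝ f x‖ ≤ L2 * ‖y - x‖ := by
  refine norm_sub_le_of_norm_fderiv_le ((hf.fderiv_right le_rfl).differentiable one_ne_zero)
    (fun v => ?_) x y
  rw [← norm_iteratedFDeriv_one, norm_iteratedFDeriv_fderiv]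
  exact hL2 v

theorem norm_taylor_remainder_le_of_norm_iteratedFDeriv_two_le (hf : ContDiff ℝ 2 f)
    (hL2 : ∀ v, ‖iteratedFDeriv ℝ 2 f v‖ ≤ L2) (x y : E) :
    ‖f y - f x - fderiv ℝ f x (y - x)‖ ≤ L2 * ‖y - x‖ ^ 2 := by
  have hL2₀ : 0 ≤ L2 := (norm_nonneg _).trans (hL2 x)
  have hderiv (u) (hu : u ∈ segment ℝ x y) : ‖fderiv ℝ f u - fderiv ℝ f x‖ ≤ L2 * ‖y - x‖ :=
    (norm_fderiv_sub_le_of_norm_iteratedFDeriv_two_le hf hL2 x u).trans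
      (by gcongr; exact norm_sub_le_of_mem_segment hu)
  calc ‖f y - f x - fderiv ℝ f x (y - x)‖ ≤ L2 * ‖y - x‖ * ‖y - x‖ :=
        (convex_segment x y).norm_image_sub_le_of_norm_fderiv_le'
          (fun u _ => (hf.differentiable two_ne_zero).differentiableAt) hderiv
          (left_mem_segment ℝ x y) (right_mem_segment ℝ x y)
    _ = L2 * ‖y - x‖ ^ 2 := by ring

theorem norm_sub_div_rpow_le_of_norm_fderiv_le (hf : Differentiable ℝ f)
    (hL1 : ∀ v, ‖fderiv ℝ f v‖ ≤ L1) {u v : E} {h κ N : ℝ} (hh : 0 < h)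
    (huv : ‖v - u‖ ≤ N * h ^ κ) : ‖f v - f u‖ / h ^ κ ≤ L1 * N := by
  have hL1₀ : 0 ≤ L1 := (norm_nonneg _).trans (hL1 u)
  rw [div_le_iff₀ (Real.rpow_pos_of_pos hh κ)]
  calc ‖f v - f u‖ ≤ L1 * ‖v - u‖ := norm_sub_le_of_norm_fderiv_le hf hL1 u v
    _ ≤ L1 * (N * h ^ κ) := by gcongr
    _ = L1 * N * h ^ κ := by ring

theorem norm_fderiv_add_taylor_remainder_div_rpow_le (hf : ContDiff ℝ 2 f)
    (hL1 : ∀ v, ‖fderiv ℝ f v‖ ≤ L1) (hL2 : ∀ v, ‖iteratedFDeriv ℝ 2 f v‖ ≤ L2)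
    {u v r : E} {h κ Nz Nr : ℝ} (hh : 0 < h) (huv : ‖v - u‖ ≤ Nz * h ^ κ)
    (hr : ‖r‖ ≤ Nr * h ^ (2 * κ)) :
    ‖fderiv ℝ f u r + (f v - f u - fderiv ℝ f u (v - u))‖ / h ^ (2 * κ)
      ≤ L1 * Nr + L2 * Nz ^ 2 := by
  have hL1₀ : 0 ≤ L1 := (norm_nonneg _).trans (hL1 u)
  have hL2₀ : 0 ≤ L2 := (norm_nonneg _).trans (hL2 u)
  have hsq : h ^ (2 * κ) = (h ^ κ) ^ 2 := by
    rw [two_mul, Real.rpow_add hh, sq]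
  rw [div_le_iff₀ (Real.rpow_pos_of_pos hh _)]
  calc ‖fderiv ℝ f u r + (f v - f u - fderiv ℝ f u (v - u))‖
      ≤ L1 * ‖r‖ + L2 * ‖v - u‖ ^ 2 :=
        (norm_add_le _ _).trans (add_le_add ((fderiv ℝ f u).le_of_opNorm_le (hL1 u) r)
          (norm_taylor_remainder_le_of_norm_iteratedFDeriv_two_le hf hL2 u v))
    _ ≤ L1 * (Nr * h ^ (2 * κ)) + L2 * (Nz * h ^ κ) ^ 2 := by gcongr
    _ = (L1 * Nr + L2 * Nz ^ 2) * h ^ (2 * κ) := by rw [hsq]; ring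

end BoundedDerivatives

section Jacobian

variable {n k l : ℕ} {σ : Matrix (Fin k) (Fin 1) ℝ → Matrix (Fin l) (Fin 1) ℝ} {L1 L2 : ℝ}

theorem jacobian_eq_stdMatrix (v : Matrix (Fin k) (Fin 1) ℝ) :
    jacobian σ v = (fderiv ℝ σ v).stdMatrix := rfl

theorem comp_sub_eq_controlled (σ : Matrix (Fin k) (Fin 1) ℝ → Matrix (Fin l) (Fin 1) ℝ)
    {u v r : Matrix (Fin k) (Fin 1) ℝ} {x : Matrix (Fin 1) (Fin n) ℝ}
    {ζ : Matrix (Fin n) (Fin k) ℝ} (h : v - u = (x * ζ)ᵀ + r) :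
    σ v - σ u = (x * (ζ * (jacobian σ u)ᵀ))ᵀ
      + (fderiv ℝ σ u r + (σ v - σ u - fderiv ℝ σ u (v - u))) := by
  have hlin : fderiv ℝ σ u (v - u) = (x * (ζ * (jacobian σ u)ᵀ))ᵀ + fderiv ℝ σ u r := by
    rw [h, map_add, ← ContinuousLinearMap.stdMatrix_mul, ← jacobian_eq_stdMatrix]
    simp only [Matrix.transpose_mul, Matrix.transpose_transpose, Matrix.mul_assoc]
  rw [hlin]
  abel

theorem norm_mul_jacobian_transpose_le (hL1 : ∀ v, ‖fderiv ℝ σ v‖ ≤ L1)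
    {ζ : Matrix (Fin n) (Fin k) ℝ} {N : ℝ} (hζ : ‖ζ‖ ≤ N) (u : Matrix (Fin k) (Fin 1) ℝ) :
    ‖ζ * (jacobian σ u)ᵀ‖ ≤ k * N * L1 := by
  have hJ : ‖jacobian σ u‖ ≤ L1 := (ContinuousLinearMap.norm_stdMatrix_le _).trans (hL1 u)
  calc ‖ζ * (jacobian σ u)ᵀ‖ ≤ Fintype.card (Fin k) * ‖ζ‖ * ‖(jacobian σ u)ᵀ‖ :=
        Matrix.norm_mul_le_card_mul_norm_mul_norm _ _
    _ ≤ k * N * L1 := by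
        have hN : 0 ≤ N := (norm_nonneg _).trans hζ
        rw [Fintype.card_fin, Matrix.norm_transpose]
        gcongr

theorem norm_mul_jacobian_transpose_sub_div_rpow_le (hσ : ContDiff ℝ 2 σ)
    (hL1 : ∀ v, ‖fderiv ℝ σ v‖ ≤ L1) (hL2 : ∀ v, ‖iteratedFDeriv ℝ 2 σ v‖ ≤ L2)
    {u v : Matrix (Fin k) (Fin 1) ℝ} {ζ ζ' : Matrix (Fin n) (Fin k) ℝ} {h κ Nz N0 Nκ : ℝ}
    (hh : 0 < h) (huv : ‖v - u‖ ≤ Nz * h ^ κ) (hζ : ‖ζ‖ ≤ N0) (hζζ' : ‖ζ' - ζ‖ ≤ Nκ * h ^ κ) :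
    ‖ζ' * (jacobian σ v)ᵀ - ζ * (jacobian σ u)ᵀ‖ / h ^ κ ≤ k * (Nκ * L1 + N0 * (L2 * Nz)) := by
  have hL2₀ : 0 ≤ L2 := (norm_nonneg _).trans (hL2 u)
  have hJ : ‖jacobian σ v‖ ≤ L1 := (ContinuousLinearMap.norm_stdMatrix_le _).trans (hL1 v)
  have hJJ : ‖jacobian σ v - jacobian σ u‖ ≤ L2 * (Nz * h ^ κ) := by
    rw [jacobian_eq_stdMatrix, jacobian_eq_stdMatrix, ← ContinuousLinearMap.stdMatrix_sub]
    calc _ ≤ ‖fderiv ℝ σ v - fderiv ℝ σ u‖ := ContinuousLinearMap.norm_stdMatrix_le _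
      _ ≤ L2 * ‖v - u‖ := norm_fderiv_sub_le_of_norm_iteratedFDeriv_two_le hσ hL2 u v
      _ ≤ L2 * (Nz * h ^ κ) := by gcongr
  rw [div_le_iff₀ (Real.rpow_pos_of_pos hh κ)]
  calc ‖ζ' * (jacobian σ v)ᵀ - ζ * (jacobian σ u)ᵀ‖
      ≤ Fintype.card (Fin k) * (‖ζ' - ζ‖ * ‖(jacobian σ v)ᵀ‖
          + ‖ζ‖ * ‖(jacobian σ v)ᵀ - (jacobian σ u)ᵀ‖) :=
        Matrix.norm_mul_sub_mul_le _ _ _ _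
    _ ≤ k * (Nκ * h ^ κ * L1 + N0 * (L2 * (Nz * h ^ κ))) := by
        rw [Fintype.card_fin, ← Matrix.transpose_sub, Matrix.norm_transpose,
          Matrix.norm_transpose]
        have hN0 : 0 ≤ N0 := (norm_nonneg _).trans hζ
        have hNκ : 0 ≤ Nκ * h ^ κ := (norm_nonneg _).trans hζζ'
        gcongr
    _ = k * (Nκ * L1 + N0 * (L2 * Nz)) * h ^ κ := by ring

end Jacobian

theorem nonneg_of_norm_le_mul_rpow {G : Type*} [SeminormedAddGroup G] {x : G} {N h κ : ℝ}
    (hx : ‖x‖ ≤ N * h ^ κ) (hh : 0 < h) : 0 ≤ N :=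
  nonneg_of_mul_nonneg_left ((norm_nonneg _).trans hx) (Real.rpow_pos_of_pos hh κ)

theorem add_le_mul_one_add_sq {k L1 L2 Nz Nζ0 Nζκ Nr T1 T2 T3 T4 : ℝ} (hk : 0 ≤ k)
    (hL1 : 0 ≤ L1) (hL2 : 0 ≤ L2) (hNz : 0 ≤ Nz) (hNζ0 : 0 ≤ Nζ0) (hNζκ : 0 ≤ Nζκ) (hNr : 0 ≤ Nr)
    (h1 : T1 ≤ L1 * Nz) (h2 : T2 ≤ k * Nζ0 * L1) (h3 : T3 ≤ k * (Nζκ * L1 + Nζ0 * (L2 * Nz)))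
    (h4 : T4 ≤ L1 * Nr + L2 * Nz ^ 2) :
    T1 + T2 + T3 + T4 ≤ (k + 1) * (L1 + L2) * (1 + (Nz + Nζ0 + Nζκ + Nr) ^ 2) := by
  set N := Nz + Nζ0 + Nζκ + Nr
  have hlin : Nz + k * Nζ0 + k * Nζκ + Nr ≤ (k + 1) * N := by nlinarith
  have hquad : k * (Nζ0 * Nz) + Nz ^ 2 ≤ (k + 1) * N ^ 2 := by
    have hNz_le : Nz ≤ N := by linarith
    have hcross : Nζ0 * Nz ≤ N ^ 2 := by rw [sq]; gcongr; linarith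
    have hsq : Nz ^ 2 ≤ N ^ 2 := by gcongr
    nlinarith [mul_le_mul_of_nonneg_left hcross hk]
  have hN : N ≤ 1 + N ^ 2 := by nlinarith [sq_nonneg (N - 1)]
  calc T1 + T2 + T3 + T4
      ≤ L1 * (Nz + k * Nζ0 + k * Nζκ + Nr) + L2 * (k * (Nζ0 * Nz) + Nz ^ 2) := by
        linarith
    _ ≤ L1 * ((k + 1) * N) + L2 * ((k + 1) * N ^ 2) := by gcongr
    _ ≤ L1 * ((k + 1) * (1 + N ^ 2)) + L2 * ((k + 1) * (1 + N ^ 2)) := by gcongr; linarith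
    _ = (k + 1) * (L1 + L2) * (1 + N ^ 2) := by ring

theorem controlled_path_composition_general (n k l : ℕ) (κ γ : ℝ) (L1 L2 : ℝ) :
    ∃ c : ℝ,
      ∀ (T a b : ℝ), 0 < T → 0 ≤ a → a ≤ b → b ≤ T →
      ∀ (x1 : ℝ → ℝ → Matrix (Fin 1) (Fin n) ℝ) (Kx : ℝ),
      (∀ s t : ℝ, a ≤ s → s < t → t ≤ b → ‖x1 t s‖ ≤ Kx * (t - s) ^ γ) →
      ∀ (z : ℝ → Matrix (Fin k) (Fin 1) ℝ)
        (ζ : ℝ → Matrix (Fin n) (Fin k) ℝ)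
        (r : ℝ → ℝ → Matrix (Fin k) (Fin 1) ℝ)
        (Nz Nζ0 Nζκ Nr : ℝ),
      -- z is a controlled path: δz = (x¹ ζ)ᵀ + r
      (∀ s t : ℝ, a ≤ s → s ≤ t → t ≤ b → z t - z s = (x1 t s * ζ s)ᵀ + r t s) →
      (∀ s t : ℝ, a ≤ s → s < t → t ≤ b → ‖z t - z s‖ ≤ Nz * (t - s) ^ κ) →
      (∀ s : ℝ, a ≤ s → s ≤ b → ‖ζ s‖ ≤ Nζ0) →
      (∀ s t : ℝ, a ≤ s → s < t → t ≤ b → ‖ζ t - ζ s‖ ≤ Nζκ * (t - s) ^ κ) →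
      (∀ s t : ℝ, a ≤ s → s < t → t ≤ b → ‖r t s‖ ≤ Nr * (t - s) ^ (2 * κ)) →
      ∀ σ : Matrix (Fin k) (Fin 1) ℝ → Matrix (Fin l) (Fin 1) ℝ,
      ContDiff ℝ 2 σ →
      (∀ v, @norm _ ContinuousLinearMap.hasOpNorm (fderiv ℝ σ v) ≤ L1) →
      (∀ v, ‖iteratedFDeriv ℝ 2 σ v‖ ≤ L2) →
      -- the decomposition of σ(z) as a controlled path
      ((∀ s t : ℝ, a ≤ s → s ≤ t → t ≤ b →
          σ (z t) - σ (z s)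
            = (x1 t s * (ζ s * (jacobian σ (z s))ᵀ))ᵀ
              + (fderiv ℝ σ (z s) (r t s)
                  + (σ (z t) - σ (z s) - fderiv ℝ σ (z s) (z t - z s)))) ∧
        -- the bound on the controlled-path norm of σ(z):
        -- N[σ(z);C^κ] + N[ζ̂;C⁰] + N[ζ̂;C^κ] + N[r̂;C^{2κ}] ≤ c (1 + N[z;Q^κ]²)
        (∀ s₁ t₁ s₂ s₃ t₃ s₄ t₄ : ℝ,
          a ≤ s₁ → s₁ < t₁ → t₁ ≤ b → a ≤ s₂ → s₂ ≤ b →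
          a ≤ s₃ → s₃ < t₃ → t₃ ≤ b → a ≤ s₄ → s₄ < t₄ → t₄ ≤ b →
          ‖σ (z t₁) - σ (z s₁)‖ / (t₁ - s₁) ^ κ
            + ‖ζ s₂ * (jacobian σ (z s₂))ᵀ‖
            + ‖ζ t₃ * (jacobian σ (z t₃))ᵀ - ζ s₃ * (jacobian σ (z s₃))ᵀ‖ / (t₃ - s₃) ^ κ
            + ‖fderiv ℝ σ (z s₄) (r t₄ s₄)
                + (σ (z t₄) - σ (z s₄) - fderiv ℝ σ (z s₄) (z t₄ - z s₄))‖
              / (t₄ - s₄) ^ (2 * κ)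
            ≤ c * (1 + (Nz + Nζ0 + Nζκ + Nr) ^ 2))) := by
  refine ⟨(k + 1) * (L1 + L2), fun T a b _ _ _ _ x1 Kx _ z ζ r Nz Nζ0 Nζκ Nr hdz hz hζ0 hζ hr
    σ hσ hL1 hL2 => ⟨fun s t hs hst ht => comp_sub_eq_controlled σ (hdz s t hs hst ht), ?_⟩⟩
  intro s₁ t₁ s₂ s₃ t₃ s₄ t₄ ha₁ h₁ hb₁ ha₂ hb₂ ha₃ h₃ hb₃ ha₄ h₄ hb₄
  have hz₁ := hz s₁ t₁ ha₁ h₁ hb₁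
  have hζ₂ := hζ0 s₂ ha₂ hb₂
  have hζ₃ := hζ s₃ t₃ ha₃ h₃ hb₃
  have hr₄ := hr s₄ t₄ ha₄ h₄ hb₄
  refine add_le_mul_one_add_sq k.cast_nonneg ((norm_nonneg _).trans (hL1 0))
    ((norm_nonneg _).trans (hL2 0)) (nonneg_of_norm_le_mul_rpow hz₁ (sub_pos.2 h₁))
    ((norm_nonneg _).trans hζ₂) (nonneg_of_norm_le_mul_rpow hζ₃ (sub_pos.2 h₃))
    (nonneg_of_norm_le_mul_rpow hr₄ (sub_pos.2 h₄))
    (norm_sub_div_rpow_le_of_norm_fderiv_le (hσ.differentiable two_ne_zero) hL1 (sub_pos.2 h₁) hz₁)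
    (norm_mul_jacobian_transpose_le hL1 hζ₂ _)
    (norm_mul_jacobian_transpose_sub_div_rpow_le hσ hL1 hL2 (sub_pos.2 h₃)
      (hz s₃ t₃ ha₃ h₃ hb₃) (hζ0 s₃ ha₃ (h₃.trans_le hb₃).le) hζ₃)
    (norm_fderiv_add_taylor_remainder_div_rpow_le hσ hL1 hL2 (sub_pos.2 h₄)
      (hz s₄ t₄ ha₄ h₄ hb₄) hr₄)

/-- composition of a controlled path with a regular function.
The constant `c` depends only on `sup‖Dσ‖ = L1` and `sup‖D²σ‖ = L2`
(and the dimensions, through the choice of norms). -/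
theorem controlled_path_composition (n k l : ℕ) (hn : 1 ≤ n) (hk : 1 ≤ k) (hl : 1 ≤ l)
    (κ γ : ℝ) (hκ0 : 0 < κ) (hκγ : κ ≤ γ) (hγ1 : γ < 1)
    (L1 L2 : ℝ) :
    ∃ c : ℝ,
      ∀ (T a b : ℝ), 0 < T → 0 ≤ a → a ≤ b → b ≤ T →
      ∀ (x1 : ℝ → ℝ → Matrix (Fin 1) (Fin n) ℝ) (Kx : ℝ),
      (∀ s t : ℝ, a ≤ s → s < t → t ≤ b → ‖x1 t s‖ ≤ Kx * (t - s) ^ γ) →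
      ∀ (z : ℝ → Matrix (Fin k) (Fin 1) ℝ)
        (ζ : ℝ → Matrix (Fin n) (Fin k) ℝ)
        (r : ℝ → ℝ → Matrix (Fin k) (Fin 1) ℝ)
        (Nz Nζ0 Nζκ Nr : ℝ),
      -- z is a controlled path: δz = (x¹ ζ)ᵀ + r
      (∀ s t : ℝ, a ≤ s → s ≤ t → t ≤ b → z t - z s = (x1 t s * ζ s)ᵀ + r t s) →
      (∀ s t : ℝ, a ≤ s → s < t → t ≤ b → ‖z t - z s‖ ≤ Nz * (t - s) ^ κ) →
      (∀ s : ℝ, a ≤ s → s ≤ b → ‖ζ s‖ ≤ Nζ0) →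
      (∀ s t : ℝ, a ≤ s → s < t → t ≤ b → ‖ζ t - ζ s‖ ≤ Nζκ * (t - s) ^ κ) →
      (∀ s t : ℝ, a ≤ s → s < t → t ≤ b → ‖r t s‖ ≤ Nr * (t - s) ^ (2 * κ)) →
      ∀ σ : Matrix (Fin k) (Fin 1) ℝ → Matrix (Fin l) (Fin 1) ℝ,
      ContDiff ℝ 2 σ →
      (∀ v, @norm _ ContinuousLinearMap.hasOpNorm (fderiv ℝ σ v) ≤ L1) →
      (∀ v, ‖iteratedFDeriv ℝ 2 σ v‖ ≤ L2) →
      -- the decomposition of σ(z) as a controlled path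
      ((∀ s t : ℝ, a ≤ s → s ≤ t → t ≤ b →
          σ (z t) - σ (z s)
            = (x1 t s * (ζ s * (jacobian σ (z s))ᵀ))ᵀ
              + (fderiv ℝ σ (z s) (r t s)
                  + (σ (z t) - σ (z s) - fderiv ℝ σ (z s) (z t - z s)))) ∧
        -- the bound on the controlled-path norm of σ(z):
        -- N[σ(z);C^κ] + N[ζ̂;C⁰] + N[ζ̂;C^κ] + N[r̂;C^{2κ}] ≤ c (1 + N[z;Q^κ]²)
        (∀ s₁ t₁ s₂ s₃ t₃ s₄ t₄ : ℝ,
          a ≤ s₁ → s₁ < t₁ → t₁ ≤ b → a ≤ s₂ → s₂ ≤ b →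
          a ≤ s₃ → s₃ < t₃ → t₃ ≤ b → a ≤ s₄ → s₄ < t₄ → t₄ ≤ b →
          ‖σ (z t₁) - σ (z s₁)‖ / (t₁ - s₁) ^ κ
            + ‖ζ s₂ * (jacobian σ (z s₂))ᵀ‖
            + ‖ζ t₃ * (jacobian σ (z t₃))ᵀ - ζ s₃ * (jacobian σ (z s₃))ᵀ‖ / (t₃ - s₃) ^ κ
            + ‖fderiv ℝ σ (z s₄) (r t₄ s₄)
                + (σ (z t₄) - σ (z s₄) - fderiv ℝ σ (z s₄) (z t₄ - z s₄))‖
              / (t₄ - s₄) ^ (2 * κ)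
            ≤ c * (1 + (Nz + Nζ0 + Nζκ + Nr) ^ 2))) :=
  controlled_path_composition_general n k l κ γ L1 L2
end

section
/- Contour estimate for the regularized fractional Brownian kernel. For 0 ≤ s < t, let z₁(u) = s + iu, z₂(u) = s + u + i(t−s), z₃(u) = t + i(t−s) − iu for u ∈ [0, t−s] (unit-speed parametrizations of the three segments of the path from s to t through s + i(t−s) and t + i(t−s) in the upper complex half-plane), and let w_k(v) = conjugate of z_k(v) for k = 1,2,3. Then for every α ∈ (0,1) there exists a constant c = c(α) > 0 such that for all 0 ≤ s < t and all ε > 0, ∑_{j=1}^{3} ∑_{k=1}^{3} ∫₀^{t−s} ∫₀^{t−s} | −i (z_j(u) − w_k(v)) + ε |^{α−2} du dv ≤ c (t−s)^α. -/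
/-- The three unit-speed segments of the path from `s` to `t` through
`s + i(t−s)` and `t + i(t−s)` in the upper complex half-plane:
`z₁(u) = s + iu`, `z₂(u) = s + u + i(t−s)`, `z₃(u) = t + i(t−s) − iu`,
for `u ∈ [0, t−s]`. -/
noncomputable def zpath (s t : ℝ) : Fin 3 → ℝ → ℂ :=
  ![fun u => (s : ℂ) + (u : ℂ) * Complex.I,
    fun u => ((s + u : ℝ) : ℂ) + ((t - s : ℝ) : ℂ) * Complex.I,
    fun u => (t : ℂ) + ((t - s - u : ℝ) : ℂ) * Complex.I]

/-! The real part of `-i (z - w̄) + ε` is `ε + Im z + Im w`, and it bounds the modulus from below,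
so each integrand is at most `(ε + h_j(u) + h_k(v))^(α-2)`, where the heights `h_j` of the three
segments are `u`, `L` and `L - u` with `L = t - s`. Integrating a decreasing function along any of
these heights gives at most its integral over `[0, L]`. Hence the `v`-integral is at most
`(ε + h_j(u))^(α-1) / (1 - α)`, and the `u`-integral at most
`((ε + L)^α - ε^α) / (α (1 - α)) ≤ L^α / (α (1 - α))` by subadditivity of `x ↦ x^α`. -/

open MeasureTheory Set

lemma intervalIntegral.integral_mono_on_of_nonneg {f g : ℝ → ℝ} {a b : ℝ} (hab : a ≤ b)
    (hf : ∀ x ∈ Icc a b, 0 ≤ f x) (hfg : ∀ x ∈ Icc a b, f x ≤ g x)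
    (hg : IntervalIntegrable g volume a b) :
    ∫ x in a..b, f x ≤ ∫ x in a..b, g x := by
  rw [intervalIntegral.integral_of_le hab, intervalIntegral.integral_of_le hab]
  exact setIntegral_mono_of_nonneg (fun x hx => hf x (Ioc_subset_Icc_self hx))
    (fun x hx => hfg x (Ioc_subset_Icc_self hx)) hg.1

lemma antitoneOn_add_rpow {a p : ℝ} (ha : 0 < a) (hp : p ≤ 0) :
    AntitoneOn (fun x : ℝ => (a + x) ^ p) (Ici 0) := fun x hx _ _ hxy =>
  Real.rpow_le_rpow_of_nonpos (by linarith [mem_Ici.mp hx]) (by linarith) hp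

lemma integral_add_rpow_sub_two_le {α a L : ℝ} (hα : α < 1) (ha : 0 < a) (hL : 0 ≤ L) :
    ∫ v in (0 : ℝ)..L, (a + v) ^ (α - 2) ≤ a ^ (α - 1) / (1 - α) := by
  have h0 : (0 : ℝ) ∉ uIcc a (a + L) := by
    rw [uIcc_of_le (by linarith)]
    exact fun h => absurd h.1 (by linarith)
  rw [intervalIntegral.integral_comp_add_left (fun x => x ^ (α - 2)), add_zero,
    integral_rpow (Or.inr ⟨by linarith, h0⟩), show α - 2 + 1 = α - 1 by ring,
    ← neg_div_neg_eq, neg_sub, neg_sub]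
  gcongr
  exact sub_le_self _ (Real.rpow_nonneg (by linarith) _)

lemma integral_add_rpow_sub_one_le {α ε L : ℝ} (hα0 : 0 < α) (hα1 : α ≤ 1) (hε : 0 < ε)
    (hL : 0 ≤ L) :
    ∫ u in (0 : ℝ)..L, (ε + u) ^ (α - 1) ≤ L ^ α / α := by
  rw [intervalIntegral.integral_comp_add_left (fun x => x ^ (α - 1)), add_zero,
    integral_rpow (Or.inl (by linarith)), show α - 1 + 1 = α by ring]
  gcongr
  linarith [Real.rpow_add_le_add_rpow hε.le hL hα0.le hα1, Real.rpow_nonneg hε.le α]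

lemma norm_neg_I_mul_sub_conj_add_rpow_le {z w : ℂ} {ε p : ℝ} (hpos : 0 < ε + z.im + w.im)
    (hp : p ≤ 0) :
    ‖-Complex.I * (z - (starRingEnd ℂ) w) + (ε : ℂ)‖ ^ p ≤ (ε + z.im + w.im) ^ p := by
  have hre : (-Complex.I * (z - (starRingEnd ℂ) w) + (ε : ℂ)).re = ε + z.im + w.im := by
    simp only [Complex.add_re, Complex.mul_re, Complex.neg_re, Complex.neg_im, Complex.I_re,
      Complex.I_im, Complex.sub_re, Complex.sub_im, Complex.conj_re, Complex.conj_im,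
      Complex.ofReal_re]
    ring
  exact Real.rpow_le_rpow_of_nonpos hpos (hre ▸ Complex.re_le_norm _) hp

noncomputable def zpathHeight (L : ℝ) : Fin 3 → ℝ → ℝ :=
  ![fun u => u, fun _ => L, fun u => L - u]

lemma im_zpath (s t : ℝ) (j : Fin 3) (u : ℝ) : (zpath s t j u).im = zpathHeight (t - s) j u := by
  fin_cases j <;> simp [zpath, zpathHeight]

lemma zpathHeight_mem_Icc {L u : ℝ} (k : Fin 3) (hu : u ∈ Icc 0 L) :
    zpathHeight L k u ∈ Icc 0 L := by
  obtain ⟨h0, hL⟩ := hu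
  refine ⟨?_, ?_⟩ <;> fin_cases k <;> simp [zpathHeight] <;> linarith

section Antitone

variable {f : ℝ → ℝ} {L : ℝ}

lemma intervalIntegrable_comp_zpathHeight (hL : 0 ≤ L) (hf : AntitoneOn f (Icc 0 L))
    (k : Fin 3) : IntervalIntegrable (fun v => f (zpathHeight L k v)) volume 0 L := by
  have hfi : IntervalIntegrable f volume 0 L := (uIcc_of_le hL ▸ hf).intervalIntegrable
  fin_cases k
  · exact hfi
  · exact (intervalIntegrable_const : IntervalIntegrable (fun _ => f L) volume 0 L)
  · simpa [zpathHeight] using (hfi.comp_sub_left L).symm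

lemma integral_comp_zpathHeight_le (hL : 0 ≤ L) (hf : AntitoneOn f (Icc 0 L)) (k : Fin 3) :
    ∫ v in (0 : ℝ)..L, f (zpathHeight L k v) ≤ ∫ v in (0 : ℝ)..L, f v := by
  fin_cases k
  · rfl
  · change ∫ _ in (0 : ℝ)..L, f L ≤ _
    exact intervalIntegral.integral_mono_on hL intervalIntegrable_const
      (uIcc_of_le hL ▸ hf).intervalIntegrable
      fun v hv => hf hv (right_mem_Icc.mpr hL) hv.2
  · simp [zpathHeight, intervalIntegral.integral_comp_sub_left]

end Antitone

lemma integral_integral_norm_rpow_le {α s t ε : ℝ} (hα0 : 0 < α) (hα1 : α < 1) (hst : s ≤ t)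
    (hε : 0 < ε) (j k : Fin 3) :
    ∫ u in (0 : ℝ)..(t - s), ∫ v in (0 : ℝ)..(t - s),
        ‖-Complex.I * (zpath s t j u - (starRingEnd ℂ) (zpath s t k v)) + (ε : ℂ)‖ ^ (α - 2)
      ≤ (t - s) ^ α / (α * (1 - α)) := by
  set L := t - s
  have hL : 0 ≤ L := sub_nonneg.mpr hst
  have hheight := fun k u (hu : u ∈ Icc 0 L) => (zpathHeight_mem_Icc k hu).1
  have inner : ∀ u ∈ Icc 0 L, ∫ v in (0 : ℝ)..L,
      ‖-Complex.I * (zpath s t j u - (starRingEnd ℂ) (zpath s t k v)) + (ε : ℂ)‖ ^ (α - 2)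
        ≤ (ε + zpathHeight L j u) ^ (α - 1) / (1 - α) := by
    intro u hu
    have ha : 0 < ε + zpathHeight L j u := by linarith [hheight j u hu]
    have hF : AntitoneOn (fun x => (ε + zpathHeight L j u + x) ^ (α - 2)) (Icc 0 L) :=
      (antitoneOn_add_rpow ha (by linarith)).mono Icc_subset_Ici_self
    calc _ ≤ ∫ v in (0 : ℝ)..L, (ε + zpathHeight L j u + zpathHeight L k v) ^ (α - 2) := by
          refine intervalIntegral.integral_mono_on_of_nonneg hL (fun _ _ => by positivity)
            (fun v hv => ?_) (intervalIntegrable_comp_zpathHeight hL hF k)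
          rw [← im_zpath, ← im_zpath]
          refine norm_neg_I_mul_sub_conj_add_rpow_le ?_ (by linarith)
          rw [im_zpath, im_zpath]
          linarith [hheight k v hv]
      _ ≤ ∫ v in (0 : ℝ)..L, (ε + zpathHeight L j u + v) ^ (α - 2) :=
          integral_comp_zpathHeight_le hL hF k
      _ ≤ _ := integral_add_rpow_sub_two_le hα1 ha hL
  have hG : AntitoneOn (fun x => (ε + x) ^ (α - 1)) (Icc 0 L) :=
    (antitoneOn_add_rpow hε (by linarith)).mono Icc_subset_Ici_self
  calc _ ≤ ∫ u in (0 : ℝ)..L, (ε + zpathHeight L j u) ^ (α - 1) / (1 - α) :=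
        intervalIntegral.integral_mono_on_of_nonneg hL
          (fun _ _ => intervalIntegral.integral_nonneg hL fun _ _ => by positivity) inner
          ((intervalIntegrable_comp_zpathHeight hL hG j).div_const _)
    _ = (∫ u in (0 : ℝ)..L, (ε + zpathHeight L j u) ^ (α - 1)) / (1 - α) :=
        intervalIntegral.integral_div _ _
    _ ≤ (∫ u in (0 : ℝ)..L, (ε + u) ^ (α - 1)) / (1 - α) :=
        div_le_div_of_nonneg_right (integral_comp_zpathHeight_le hL hG j) (by linarith)
    _ ≤ (L ^ α / α) / (1 - α) :=
        div_le_div_of_nonneg_right (integral_add_rpow_sub_one_le hα0 hα1.le hε hL) (by linarith)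
    _ = L ^ α / (α * (1 - α)) := div_div _ _ _

/-- contour estimate for the regularized fractional Brownian
kernel.  The paths `w_k` are the complex conjugates of the paths `z_k`. -/
theorem contour_estimate_fbm_kernel (α : ℝ) (hα0 : 0 < α) (hα1 : α < 1) :
    ∃ c : ℝ, 0 < c ∧
      ∀ s t ε : ℝ, 0 ≤ s → s < t → 0 < ε →
        (∑ j : Fin 3, ∑ k : Fin 3,
          ∫ u in (0 : ℝ)..(t - s), ∫ v in (0 : ℝ)..(t - s),
            ‖-Complex.I * (zpath s t j u - (starRingEnd ℂ) (zpath s t k v))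
                + (ε : ℂ)‖ ^ (α - 2))
          ≤ c * (t - s) ^ α := by
  refine ⟨9 / (α * (1 - α)), div_pos (by norm_num) (mul_pos hα0 (by linarith)), ?_⟩
  intro s t ε _ hst hε
  calc _ ≤ ∑ _j : Fin 3, ∑ _k : Fin 3, (t - s) ^ α / (α * (1 - α)) :=
        Finset.sum_le_sum fun j _ => Finset.sum_le_sum fun k _ =>
          integral_integral_norm_rpow_le hα0 hα1 hst.le hε j k
    _ = 9 / (α * (1 - α)) * (t - s) ^ α := by
        simp only [Finset.sum_const, Finset.card_univ, Fintype.card_fin, nsmul_eq_mul]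
        ring
end
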